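/- arXiv:2102.07600 — 3 statements merged into one kernel-verified Lean document; each statement's English description precedes it below -/
import Mathlib

section
/- Existence of classical shock solutions (Theorem 3.3, existence part): Given classical shock front initial data (χ₀,χ₁,N₀) with initial shock front σ₀ ∈ (0,∞), there exist T > 0 and a classical shock solution (χ,N) with shock front σ on the time interval [0,T] whose initial data is (χ₀,χ₁,N₀). -/
open Set Filter Topology

noncomputable section

/-- The uncurried version of a function of two real variables `(s, t)`. -/
def uc (χ : ℝ → ℝ → ℝ) : ℝ × ℝ → ℝ := fun p => χ p.1 p.2

/-- Directional partial derivative of `f` within the set `S` at `p` in direction `v`. -/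
def pder (f : ℝ × ℝ → ℝ) (S : Set (ℝ × ℝ)) (v : ℝ × ℝ) (p : ℝ × ℝ) : ℝ :=
  fderivWithin ℝ f S p v

/-- The extensible region `{(s,t) : t ∈ [0,T], s ≥ σ(t)}`. -/
def Ereg (σ : ℝ → ℝ) (T : ℝ) : Set (ℝ × ℝ) :=
  {p : ℝ × ℝ | p.2 ∈ Icc 0 T ∧ σ p.2 ≤ p.1}

/-- The extensible region for all nonnegative times. -/
def EregInf (σ : ℝ → ℝ) : Set (ℝ × ℝ) :=
  {p : ℝ × ℝ | 0 ≤ p.2 ∧ σ p.2 ≤ p.1}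

/-- D'Alembert's solution of the wave equation `χ_tt = χ_ss` with data `(χ₀, χ₁)`. -/
def dAlem (χ₀ χ₁ : ℝ → ℝ) (s t : ℝ) : ℝ :=
  (χ₀ (s + t) + χ₀ (s - t)) / 2 + (∫ ξ in (s - t)..(s + t), χ₁ ξ) / 2

/-- Classical shock front initial data `(χ₀, χ₁, N₀)` with initial shock front `σ₀`,
threshold tension `N₁`, lower tension bound `η` and tension `ζ t + τ` prescribed at
the infinite end.  One-sided values and derivatives at `σ₀` are taken from the right,
i.e. within `Ici σ₀`. -/
structure IsShockData (N₁ η τ ζ σ₀ : ℝ) (χ₀ χ₁ N₀ : ℝ → ℝ) : Prop where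
  sigma0_pos : 0 < σ₀
  chi0_cont : ContinuousOn χ₀ (Ici 0)
  chi1_bdd : ∀ K : ℝ, ∃ M, ∀ s ∈ Icc (0 : ℝ) K, |χ₁ s| ≤ M
  N0_bdd : ∀ K : ℝ, ∃ M, ∀ s ∈ Icc (0 : ℝ) K, |N₀ s| ≤ M
  chi0_smooth : ContDiffOn ℝ 2 χ₀ (Ici σ₀)
  chi1_smooth : ContDiffOn ℝ 1 χ₁ (Ici σ₀)
  N0_smooth : ContDiffOn ℝ 1 N₀ (Ici σ₀)
  N0_eq : ∀ s ∈ Ici σ₀, N₀ s = derivWithin χ₀ (Ici σ₀) s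
  N0_gt : ∀ s ∈ Ici σ₀, η < N₀ s
  N0_lt : ∀ s ∈ Ici σ₀, N₀ s < N₁
  chi0_lim : Tendsto (derivWithin χ₀ (Ici σ₀)) atTop (𝓝 τ)
  chi1_lim : Tendsto (derivWithin χ₁ (Ici σ₀)) atTop (𝓝 ζ)
  front : χ₀ σ₀ = N₁ * σ₀
  speed : 1 < χ₁ σ₀ / (N₁ - derivWithin χ₀ (Ici σ₀) σ₀)
  inext_chi0 : ∀ s ∈ Icc 0 σ₀, χ₀ s = N₁ * s
  inext_chi1 : ∀ s ∈ Ico 0 σ₀, χ₁ s = 0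
  inext_N0 : ∀ s ∈ Ico 0 σ₀,
    N₀ s = N₀ σ₀ + (χ₁ σ₀ / (N₁ - derivWithin χ₀ (Ici σ₀) σ₀)) ^ 2 * (N₁ - N₀ σ₀)

/-- `(χ, N)` together with the shock front `σ` is a classical shock solution on the
time interval `[0,T]` with initial data `(χ₀, χ₁, N₀)` and initial shock front `σ₀`.
Partial derivatives in the extensible region are taken within `Ereg σ T`, and the
shock speed is `derivWithin σ (Icc 0 T)`. -/
structure IsShockSolution (N₁ η τ ζ σ₀ T : ℝ) (χ₀ χ₁ N₀ : ℝ → ℝ)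
    (χ N : ℝ → ℝ → ℝ) (σ : ℝ → ℝ) : Prop where
  chi_cont : ContinuousOn (uc χ) (Ici 0 ×ˢ Icc 0 T)
  chit_bdd : ∀ K : ℝ, ∃ M, ∀ p ∈ Ereg σ T, p.1 ≤ K → |pder (uc χ) (Ereg σ T) (0, 1) p| ≤ M
  N_bdd : ∀ K : ℝ, ∃ M, ∀ s ∈ Icc (0 : ℝ) K, ∀ t ∈ Icc (0 : ℝ) T, |N s t| ≤ M
  sigma_smooth : ContDiffOn ℝ 2 σ (Icc 0 T)
  sigma_ge : ∀ t ∈ Icc 0 T, σ₀ ≤ σ t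
  sigma_init : σ 0 = σ₀
  chi_smooth : ContDiffOn ℝ 2 (uc χ) (Ereg σ T)
  N_smooth : ContDiffOn ℝ 1 (uc N) (Ereg σ T)
  N_eq : ∀ p ∈ Ereg σ T, N p.1 p.2 = pder (uc χ) (Ereg σ T) (1, 0) p
  N_gt : ∀ p ∈ Ereg σ T, η < N p.1 p.2
  N_lt : ∀ p ∈ Ereg σ T, N p.1 p.2 < N₁
  front : ∀ t ∈ Icc 0 T, χ (σ t) t = N₁ * σ t
  sigma_der : ∀ t ∈ Icc 0 T,
    derivWithin σ (Icc 0 T) t = pder (uc χ) (Ereg σ T) (0, 1) (σ t, t) / (N₁ - N (σ t) t)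
  sigma_der_gt : ∀ t ∈ Icc 0 T, 1 < derivWithin σ (Icc 0 T) t
  inext_chi : ∀ t ∈ Icc 0 T, ∀ s ∈ Icc 0 (σ t), χ s t = N₁ * s
  inext_N : ∀ t ∈ Icc 0 T, ∀ s ∈ Ico 0 (σ t),
    N s t = N (σ t) t + (derivWithin σ (Icc 0 T) t) ^ 2 * (N₁ - N (σ t) t)
  inext_N_gt : ∀ t ∈ Icc 0 T, ∀ s ∈ Ico 0 (σ t), N₁ < N s t
  wave : ∀ p ∈ Ereg σ T,
    pder (pder (uc χ) (Ereg σ T) (0, 1)) (Ereg σ T) (0, 1) p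
      = pder (pder (uc χ) (Ereg σ T) (1, 0)) (Ereg σ T) (1, 0) p
  bc_infty : ∀ t ∈ Icc 0 T,
    Tendsto (fun s => pder (uc χ) (Ereg σ T) (1, 0) (s, t)) atTop (𝓝 (ζ * t + τ))
  init_chi : ∀ s ∈ Ici σ₀, χ s 0 = χ₀ s
  init_chit : ∀ s ∈ Ici σ₀, pder (uc χ) (Ereg σ T) (0, 1) (s, 0) = χ₁ s

/-! ### Auxiliary lemmas -/

/-- Gluing a function `f` on `Ici a` with `g` on `Iic a`, matching value and derivative. -/
theorem glue_hasDerivAt {f g df dg : ℝ → ℝ} {a : ℝ}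
    (hf : ∀ s ∈ Ici a, HasDerivWithinAt f (df s) (Ici a) s)
    (hg : ∀ s, HasDerivAt g (dg s) s)
    (hval : f a = g a) (hder : df a = dg a) (x : ℝ) :
    HasDerivAt (fun s => if a ≤ s then f s else g s)
      (if a ≤ x then df x else dg x) x := by
  rcases lt_trichotomy x a with h | h | h
  · rw [if_neg (not_le.2 h)]
    refine (hg x).congr_of_eventuallyEq ?_
    filter_upwards [Iio_mem_nhds h] with s hs
    exact if_neg (not_le.2 hs)
  · subst h
    rw [if_pos le_rfl]
    have h1 : HasDerivWithinAt (fun s => if x ≤ s then f s else g s) (df x) (Ici x) x :=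
      (hf x self_mem_Ici).congr (fun s hs => if_pos hs) (if_pos le_rfl)
    have h2 : HasDerivWithinAt (fun s => if x ≤ s then f s else g s) (df x) (Iic x) x := by
      rw [hder]
      refine (hg x).hasDerivWithinAt.congr (fun s hs => ?_) ?_
      · rcases eq_or_lt_of_le (mem_Iic.1 hs) with rfl | hlt
        · rw [if_pos le_rfl, hval]
        · exact if_neg (not_le.2 hlt)
      · rw [if_pos le_rfl, hval]
    have := h2.union h1
    rwa [Iic_union_Ici, hasDerivWithinAt_univ] at this
  · rw [if_pos h.le]
    refine ((hf x h.le).hasDerivAt (Ici_mem_nhds h)).congr_of_eventuallyEq ?_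
    filter_upwards [Ioi_mem_nhds h] with s hs
    exact if_pos hs.le

theorem glue_continuous {df dg : ℝ → ℝ} {a : ℝ}
    (hdf : ContinuousOn df (Ici a)) (hdg : Continuous dg) (hder : df a = dg a) :
    Continuous (fun x => if a ≤ x then df x else dg x) := by
  refine continuous_if_le continuous_const continuous_id (hdf.mono ?_) hdg.continuousOn ?_
  · intro x hx; exact hx
  · intro x hx; rw [← hx, hder]

theorem glue_contDiffOne {f g df dg : ℝ → ℝ} {a : ℝ}
    (hf : ∀ s ∈ Ici a, HasDerivWithinAt f (df s) (Ici a) s) (hdf : ContinuousOn df (Ici a))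
    (hg : ∀ s, HasDerivAt g (dg s) s) (hdg : Continuous dg)
    (hval : f a = g a) (hder : df a = dg a) :
    ContDiff ℝ 1 (fun s => if a ≤ s then f s else g s) ∧
      deriv (fun s => if a ≤ s then f s else g s) = fun x => if a ≤ x then df x else dg x := by
  have hF := glue_hasDerivAt hf hg hval hder
  have hFd := glue_continuous hdf hdg hder
  have hd : deriv (fun s => if a ≤ s then f s else g s)
      = fun x => if a ≤ x then df x else dg x := funext fun x => (hF x).deriv
  exact ⟨contDiff_one_iff_deriv.2 ⟨fun x => (hF x).differentiableAt, hd ▸ hFd⟩, hd⟩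

/-- sum of coordinates as a CLM -/
def Lpl : ℝ × ℝ →L[ℝ] ℝ := ContinuousLinearMap.fst ℝ ℝ ℝ + ContinuousLinearMap.snd ℝ ℝ ℝ
/-- difference of coordinates as a CLM -/
def Lmi : ℝ × ℝ →L[ℝ] ℝ := ContinuousLinearMap.fst ℝ ℝ ℝ - ContinuousLinearMap.snd ℝ ℝ ℝ

@[simp] lemma Lpl_apply (p : ℝ × ℝ) : Lpl p = p.1 + p.2 := rfl
@[simp] lemma Lmi_apply (p : ℝ × ℝ) : Lmi p = p.1 - p.2 := rfl

/-- plane wave superposition -/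
def pw (f g : ℝ → ℝ) : ℝ × ℝ → ℝ := fun p => f (p.1 + p.2) + g (p.1 - p.2)

lemma pw_contDiff {f g : ℝ → ℝ} {n : WithTop ℕ∞} (hf : ContDiff ℝ n f) (hg : ContDiff ℝ n g) :
    ContDiff ℝ n (pw f g) :=
  (hf.comp Lpl.contDiff).add (hg.comp Lmi.contDiff)

lemma pw_continuous {f g : ℝ → ℝ} (hf : Continuous f) (hg : Continuous g) :
    Continuous (pw f g) :=
  (hf.comp Lpl.continuous).add (hg.comp Lmi.continuous)

lemma pw_hasFDerivAt {f g : ℝ → ℝ} {fa gb : ℝ} {p : ℝ × ℝ}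
    (hf : HasDerivAt f fa (p.1 + p.2)) (hg : HasDerivAt g gb (p.1 - p.2)) :
    HasFDerivAt (pw f g) (fa • Lpl + gb • Lmi) p := by
  have h1 : HasFDerivAt (f ∘ Lpl) (fa • Lpl) p :=
    hf.comp_hasFDerivAt_of_eq p Lpl.hasFDerivAt rfl
  have h2 : HasFDerivAt (g ∘ Lmi) (gb • Lmi) p :=
    hg.comp_hasFDerivAt_of_eq p Lmi.hasFDerivAt rfl
  exact h1.add h2

lemma Lcomb_apply (fa gb : ℝ) (v : ℝ × ℝ) :
    (fa • Lpl + gb • Lmi) v = fa * (v.1 + v.2) + gb * (v.1 - v.2) := by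
  simp [Lpl, Lmi]; ring

/-- bounds from tails: a continuous function on `Ici a` tending to a limit is bounded. -/
lemma tail_bdd {f : ℝ → ℝ} {a l : ℝ} (hf : ContinuousOn f (Ici a))
    (hl : Tendsto f atTop (𝓝 l)) : ∃ M, ∀ s ∈ Ici a, |f s| ≤ M := by
  have h1 : ∀ᶠ s in atTop, |f s| ≤ |l| + 1 := by
    filter_upwards [hl.eventually (Metric.ball_mem_nhds l one_pos)] with s hs
    have : |f s - l| < 1 := by simpa [Real.dist_eq] using hs
    calc |f s| ≤ |f s - l| + |l| := by
          simpa using abs_add_le (f s - l) l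
      _ ≤ |l| + 1 := by linarith
  obtain ⟨K, hK⟩ := h1.exists_forall_of_atTop
  obtain ⟨C, hC⟩ := (isCompact_Icc (a := a) (b := max a K)).exists_bound_of_continuousOn
    (hf.mono (Icc_subset_Ici_self))
  refine ⟨max C (|l| + 1), fun s hs => ?_⟩
  rcases le_total s (max a K) with h | h
  · exact le_max_of_le_left (by simpa using hC s ⟨hs, h⟩)
  · exact le_max_of_le_right (hK s (le_trans (le_max_right _ _) h))

/-- strict bounds improve to uniform strict bounds using the limit. -/
lemma tail_bounds {f : ℝ → ℝ} {a l lo hi : ℝ} (hf : ContinuousOn f (Ici a))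
    (hl : Tendsto f atTop (𝓝 l))
    (h1 : ∀ s ∈ Ici a, lo < f s) (h2 : ∀ s ∈ Ici a, f s < hi)
    (hlo : lo < l) (hhi : l < hi) :
    ∃ lo' hi', lo < lo' ∧ hi' < hi ∧ ∀ s ∈ Ici a, lo' ≤ f s ∧ f s ≤ hi' := by
  have h3 : ∀ᶠ s in atTop, f s ∈ Ioo ((lo + l)/2) ((l + hi)/2) :=
    hl.eventually (Ioo_mem_nhds (by linarith) (by linarith))
  obtain ⟨K, hK⟩ := h3.exists_forall_of_atTop
  set b := max (a + 1) K with hb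
  have hab : a < b := lt_of_lt_of_le (by linarith) (le_max_left _ _)
  have hcomp : IsCompact (Icc a b) := isCompact_Icc
  have hne : (Icc a b).Nonempty := ⟨a, le_rfl, hab.le⟩
  have hcont : ContinuousOn f (Icc a b) := hf.mono Icc_subset_Ici_self
  obtain ⟨p, hp, hpmin⟩ := hcomp.exists_isMinOn hne hcont
  obtain ⟨q, hq, hqmax⟩ := hcomp.exists_isMaxOn hne hcont
  refine ⟨min ((lo + l)/2) (f p), max ((l + hi)/2) (f q), ?_, ?_, fun s hs => ⟨?_, ?_⟩⟩
  · exact lt_min (by linarith) (h1 p hp.1)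
  · exact max_lt (by linarith) (h2 q hq.1)
  · rcases le_total s b with h | h
    · exact le_trans (min_le_right _ _) (hpmin ⟨hs, h⟩)
    · exact le_trans (min_le_left _ _) (hK s (le_trans (le_max_right _ _) h)).1.le
  · rcases le_total s b with h | h
    · exact le_trans (hqmax ⟨hs, h⟩) (le_max_right _ _)
    · exact le_trans (hK s (le_trans (le_max_right _ _) h)).2.le (le_max_left _ _)

lemma uniqueDiffOn_Ereg {σ : ℝ → ℝ} {T L : ℝ} (hT : 0 < T)
    (hlip : ∀ t ∈ Icc (0:ℝ) T, ∀ t' ∈ Icc (0:ℝ) T, t ≤ t' → σ t' - σ t ≤ L * (t' - t))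
    (hmono : ∀ t ∈ Icc (0:ℝ) T, ∀ t' ∈ Icc (0:ℝ) T, t ≤ t' → t' - t ≤ σ t' - σ t) :
    UniqueDiffOn ℝ (Ereg σ T) := by
  rintro p ⟨⟨ht0, htT⟩, hs⟩
  rcases lt_or_eq_of_le htT with h | h
  · set C : Set (ℝ × ℝ) := {q | p.2 ≤ q.2 ∧ q.2 ≤ T ∧ p.1 + L * (q.2 - p.2) ≤ q.1} with hC
    have hconv : Convex ℝ C := by
      rintro x ⟨hx1, hx2, hx3⟩ y ⟨hy1, hy2, hy3⟩ a b ha hb hab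
      obtain rfl : b = 1 - a := by linarith
      refine ⟨?_, ?_, ?_⟩ <;>
        simp only [Prod.smul_fst, Prod.smul_snd, Prod.fst_add, Prod.snd_add, smul_eq_mul]
      · nlinarith [mul_le_mul_of_nonneg_left hx1 ha, mul_le_mul_of_nonneg_left hy1 hb]
      · nlinarith [mul_le_mul_of_nonneg_left hx2 ha, mul_le_mul_of_nonneg_left hy2 hb]
      · nlinarith [mul_le_mul_of_nonneg_left hx3 ha, mul_le_mul_of_nonneg_left hy3 hb]
    have hCE : C ⊆ Ereg σ T := by
      rintro q ⟨h1, h2, h3⟩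
      refine ⟨⟨le_trans ht0 h1, h2⟩, ?_⟩
      have := hlip p.2 ⟨ht0, htT⟩ q.2 ⟨le_trans ht0 h1, h2⟩ h1
      linarith [hs]
    have hint : (interior C).Nonempty := by
      have hsub : {q : ℝ × ℝ | p.2 < q.2 ∧ q.2 < T ∧ p.1 + L * (q.2 - p.2) < q.1}
          ⊆ interior C := by
        apply interior_maximal
        · rintro q ⟨h1, h2, h3⟩; exact ⟨h1.le, h2.le, h3.le⟩
        · apply IsOpen.inter (isOpen_lt continuous_const continuous_snd)
          apply IsOpen.inter (isOpen_lt continuous_snd continuous_const)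
          exact isOpen_lt (continuous_const.add (continuous_const.mul
            (continuous_snd.sub continuous_const))) continuous_fst
      refine ⟨(p.1 + L * ((p.2 + T)/2 - p.2) + 1, (p.2 + T)/2), hsub ⟨?_, ?_, ?_⟩⟩
      · show p.2 < (p.2 + T)/2; linarith
      · show (p.2 + T)/2 < T; linarith
      · show p.1 + L * ((p.2 + T)/2 - p.2) < p.1 + L * ((p.2 + T)/2 - p.2) + 1; linarith
    have hpC : p ∈ C := ⟨le_rfl, htT, by simp⟩
    exact (uniqueDiffWithinAt_convex hconv hint (subset_closure hpC)).mono hCE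
  · have hp2 : 0 < p.2 := h ▸ hT
    set C : Set (ℝ × ℝ) := {q | 0 ≤ q.2 ∧ q.2 ≤ p.2 ∧ p.1 - p.2 + q.2 ≤ q.1} with hC
    have hconv : Convex ℝ C := by
      rintro x ⟨hx1, hx2, hx3⟩ y ⟨hy1, hy2, hy3⟩ a b ha hb hab
      obtain rfl : b = 1 - a := by linarith
      refine ⟨?_, ?_, ?_⟩ <;>
        simp only [Prod.smul_fst, Prod.smul_snd, Prod.fst_add, Prod.snd_add, smul_eq_mul]
      · nlinarith [mul_nonneg ha hx1, mul_nonneg hb hy1]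
      · nlinarith [mul_le_mul_of_nonneg_left hx2 ha, mul_le_mul_of_nonneg_left hy2 hb]
      · nlinarith [mul_le_mul_of_nonneg_left hx3 ha, mul_le_mul_of_nonneg_left hy3 hb]
    have hCE : C ⊆ Ereg σ T := by
      rintro q ⟨h1, h2, h3⟩
      refine ⟨⟨h1, le_trans h2 htT⟩, ?_⟩
      have := hmono q.2 ⟨h1, le_trans h2 htT⟩ p.2 ⟨ht0, htT⟩ h2
      linarith [hs]
    have hint : (interior C).Nonempty := by
      have hsub : {q : ℝ × ℝ | 0 < q.2 ∧ q.2 < p.2 ∧ p.1 - p.2 + q.2 < q.1} ⊆ interior C := by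
        apply interior_maximal
        · rintro q ⟨h1, h2, h3⟩; exact ⟨h1.le, h2.le, h3.le⟩
        · apply IsOpen.inter (isOpen_lt continuous_const continuous_snd)
          apply IsOpen.inter (isOpen_lt continuous_snd continuous_const)
          exact isOpen_lt (continuous_const.add continuous_snd) continuous_fst
      refine ⟨(p.1 - p.2 + p.2/2 + 1, p.2/2), hsub ⟨?_, ?_, ?_⟩⟩
      · show (0:ℝ) < p.2/2; linarith
      · show p.2/2 < p.2; linarith
      · show p.1 - p.2 + p.2/2 < p.1 - p.2 + p.2/2 + 1; linarith
    have hpC : p ∈ C := ⟨ht0, le_rfl, by linarith⟩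
    exact (uniqueDiffWithinAt_convex hconv hint (subset_closure hpC)).mono hCE

set_option maxHeartbeats 4000000 in
/-- Theorem 3.3 (existence): for classical shock front initial data there is a time
`T > 0` and a classical shock solution on `[0,T]` with that initial data. -/
theorem shock_solution_existence
    (N₁ η τ ζ σ₀ : ℝ) (χ₀ χ₁ N₀ : ℝ → ℝ)
    (hN₁ : 0 < N₁) (hη : 0 < η) (hηN : η < N₁) (hτη : η < τ) (hτN : τ < N₁) (hζ : 0 ≤ ζ)
    (hdata : IsShockData N₁ η τ ζ σ₀ χ₀ χ₁ N₀) :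
    ∃ T > (0 : ℝ), ∃ χ N : ℝ → ℝ → ℝ, ∃ σ : ℝ → ℝ,
      IsShockSolution N₁ η τ ζ σ₀ T χ₀ χ₁ N₀ χ N σ := by
  classical
  set a := σ₀ with ha
  have uIci : UniqueDiffOn ℝ (Ici a) := uniqueDiffOn_Ici a
  obtain ⟨d0, hd0def⟩ : ∃ f : ℝ → ℝ, f = derivWithin χ₀ (Ici a) := ⟨_, rfl⟩
  obtain ⟨d1, hd1def⟩ : ∃ f : ℝ → ℝ, f = derivWithin χ₁ (Ici a) := ⟨_, rfl⟩
  obtain ⟨d0', hd0'def⟩ : ∃ f : ℝ → ℝ, f = derivWithin d0 (Ici a) := ⟨_, rfl⟩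
  have hχ₀s := hdata.chi0_smooth
  have hχ₁s := hdata.chi1_smooth
  have hd0_diff : ∀ s ∈ Ici a, HasDerivWithinAt χ₀ (d0 s) (Ici a) s := fun s hs => by
    rw [hd0def]
    exact (hχ₀s.differentiableOn (by norm_num) s hs).hasDerivWithinAt
  have hd0C1 : ContDiffOn ℝ 1 d0 (Ici a) := by
    rw [hd0def]; exact hχ₀s.derivWithin uIci (by norm_num)
  have hd0'_diff : ∀ s ∈ Ici a, HasDerivWithinAt d0 (d0' s) (Ici a) s := fun s hs => by
    rw [hd0'def]
    exact (hd0C1.differentiableOn (by norm_num) s hs).hasDerivWithinAt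
  have hd0'c : ContinuousOn d0' (Ici a) := by
    rw [hd0'def]; exact hd0C1.continuousOn_derivWithin uIci (by norm_num)
  have hd1_diff : ∀ s ∈ Ici a, HasDerivWithinAt χ₁ (d1 s) (Ici a) s := fun s hs => by
    rw [hd1def]
    exact (hχ₁s.differentiableOn (by norm_num) s hs).hasDerivWithinAt
  have hd1c : ContinuousOn d1 (Ici a) := by
    rw [hd1def]; exact hχ₁s.continuousOn_derivWithin uIci (by norm_num)
  have hd0c : ContinuousOn d0 (Ici a) := hd0C1.continuousOn
  -- the extended initial data
  obtain ⟨g0, hg0def⟩ : ∃ f : ℝ → ℝ,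
    f = fun s => if a ≤ s then χ₀ s else χ₀ a + d0 a * (s-a) + d0' a/2 * (s-a)^2 := ⟨_, rfl⟩
  obtain ⟨g0d, hg0ddef⟩ : ∃ f : ℝ → ℝ,
    f = fun s => if a ≤ s then d0 s else d0 a + d0' a * (s-a) := ⟨_, rfl⟩
  obtain ⟨g0dd, hg0dddef⟩ : ∃ f : ℝ → ℝ,
    f = fun s => if a ≤ s then d0' s else d0' a := ⟨_, rfl⟩
  obtain ⟨g1, hg1def⟩ : ∃ f : ℝ → ℝ,
    f = fun s => if a ≤ s then χ₁ s else χ₁ a + d1 a * (s-a) := ⟨_, rfl⟩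
  obtain ⟨g1d, hg1ddef⟩ : ∃ f : ℝ → ℝ,
    f = fun s => if a ≤ s then d1 s else d1 a := ⟨_, rfl⟩
  have hlow0 : ∀ x : ℝ, HasDerivAt (fun s => χ₀ a + d0 a * (s-a) + d0' a/2 * (s-a)^2)
      (d0 a + d0' a * (x-a)) x := by
    intro x
    have hid : HasDerivAt (fun s : ℝ => s - a) 1 x := (hasDerivAt_id x).sub_const a
    have hsq : HasDerivAt (fun s : ℝ => (s - a)^2) (2*(x-a)) x := by
      simpa using hid.fun_pow 2
    have := ((hasDerivAt_const x (χ₀ a)).fun_add (hid.const_mul (d0 a))).fun_add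
      (hsq.const_mul (d0' a/2))
    exact this.congr_deriv (by ring)
  have hlow0d : ∀ x : ℝ, HasDerivAt (fun s => d0 a + d0' a * (s-a)) (d0' a) x := by
    intro x
    have hid : HasDerivAt (fun s : ℝ => s - a) 1 x := (hasDerivAt_id x).sub_const a
    have := (hasDerivAt_const x (d0 a)).fun_add (hid.const_mul (d0' a))
    exact this.congr_deriv (by ring)
  have hlow1 : ∀ x : ℝ, HasDerivAt (fun s => χ₁ a + d1 a * (s-a)) (d1 a) x := by
    intro x
    have hid : HasDerivAt (fun s : ℝ => s - a) 1 x := (hasDerivAt_id x).sub_const a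
    have := (hasDerivAt_const x (χ₁ a)).fun_add (hid.const_mul (d1 a))
    exact this.congr_deriv (by ring)
  have hg0 : ∀ x, HasDerivAt g0 (g0d x) x := by
    rw [hg0def, hg0ddef]
    exact glue_hasDerivAt hd0_diff hlow0 (by simp) (by simp)
  have hg0d : ∀ x, HasDerivAt g0d (g0dd x) x := by
    rw [hg0ddef, hg0dddef]
    exact glue_hasDerivAt hd0'_diff hlow0d (by simp) (by simp)
  have hg1 : ∀ x, HasDerivAt g1 (g1d x) x := by
    rw [hg1def, hg1ddef]
    exact glue_hasDerivAt hd1_diff hlow1 (by simp) (by simp)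
  have hg0dC1 : ContDiff ℝ 1 g0d := by
    rw [hg0ddef]
    exact (glue_contDiffOne hd0'_diff hd0'c hlow0d continuous_const (by simp) (by simp)).1
  have hg1C1 : ContDiff ℝ 1 g1 := by
    rw [hg1def]
    exact (glue_contDiffOne hd1_diff hd1c hlow1 continuous_const (by simp) (by simp)).1
  have hg0ddc : Continuous g0dd := by
    rw [hg0dddef]
    exact glue_continuous hd0'c continuous_const (by simp)
  have hg1dc : Continuous g1d := by
    rw [hg1ddef]
    exact glue_continuous hd1c continuous_const (by simp)
  have hg0C2 : ContDiff ℝ 2 g0 := by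
    rw [show (2 : WithTop ℕ∞) = 1 + 1 by norm_num, contDiff_succ_iff_deriv]
    refine ⟨fun x => (hg0 x).differentiableAt, by simp, ?_⟩
    have h : deriv g0 = g0d := funext fun x => (hg0 x).deriv
    rw [h]; exact hg0dC1
  have hg1cont : Continuous g1 := hg1C1.continuous
  obtain ⟨G, hGdef⟩ : ∃ f : ℝ → ℝ, f = fun x => ∫ u in a..x, g1 u := ⟨_, rfl⟩
  have hG : ∀ x, HasDerivAt G (g1 x) x := fun x => by
    rw [hGdef]
    exact (hg1cont.integral_hasStrictDerivAt a x).hasDerivAt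
  have hGC2 : ContDiff ℝ 2 G := by
    rw [show (2 : WithTop ℕ∞) = 1 + 1 by norm_num, contDiff_succ_iff_deriv]
    refine ⟨fun x => (hG x).differentiableAt, by simp, ?_⟩
    have h : deriv G = g1 := funext fun x => (hG x).deriv
    rw [h]; exact hg1C1
  -- the Riemann invariants machinery
  obtain ⟨P, hPdef⟩ : ∃ f : ℝ → ℝ, f = fun x => (g0 x + G x)/2 := ⟨_, rfl⟩
  obtain ⟨Q, hQdef⟩ : ∃ f : ℝ → ℝ, f = fun x => (g0 x - G x)/2 := ⟨_, rfl⟩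
  obtain ⟨p', hp'def⟩ : ∃ f : ℝ → ℝ, f = fun x => (g0d x + g1 x)/2 := ⟨_, rfl⟩
  obtain ⟨q', hq'def⟩ : ∃ f : ℝ → ℝ, f = fun x => (g0d x - g1 x)/2 := ⟨_, rfl⟩
  obtain ⟨p'', hp''def⟩ : ∃ f : ℝ → ℝ, f = fun x => (g0dd x + g1d x)/2 := ⟨_, rfl⟩
  obtain ⟨q'', hq''def⟩ : ∃ f : ℝ → ℝ, f = fun x => (g0dd x - g1d x)/2 := ⟨_, rfl⟩
  have hP : ∀ x, HasDerivAt P (p' x) x := fun x => by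
    rw [hPdef, hp'def]; exact ((hg0 x).add (hG x)).div_const 2
  have hQ : ∀ x, HasDerivAt Q (q' x) x := fun x => by
    rw [hQdef, hq'def]; exact ((hg0 x).sub (hG x)).div_const 2
  have hp' : ∀ x, HasDerivAt p' (p'' x) x := fun x => by
    rw [hp'def, hp''def]; exact ((hg0d x).add (hg1 x)).div_const 2
  have hq' : ∀ x, HasDerivAt q' (q'' x) x := fun x => by
    rw [hq'def, hq''def]; exact ((hg0d x).sub (hg1 x)).div_const 2
  have hPC2 : ContDiff ℝ 2 P := by rw [hPdef]; exact (hg0C2.add hGC2).div_const 2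
  have hQC2 : ContDiff ℝ 2 Q := by rw [hQdef]; exact (hg0C2.sub hGC2).div_const 2
  have hp'C1 : ContDiff ℝ 1 p' := by rw [hp'def]; exact (hg0dC1.add hg1C1).div_const 2
  have hq'C1 : ContDiff ℝ 1 q' := by rw [hq'def]; exact (hg0dC1.sub hg1C1).div_const 2
  have hp'cont : Continuous p' := hp'C1.continuous
  have hq'cont : Continuous q' := hq'C1.continuous
  -- key pointwise identities
  have hpq_add : ∀ x, p' x + q' x = g0d x := fun x => by
    rw [hp'def, hq'def]; ring
  have hpq_sub : ∀ x, p' x - q' x = g1 x := fun x => by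
    rw [hp'def, hq'def]; ring
  have hPQ_add : ∀ x, P x + Q x = g0 x := fun x => by
    rw [hPdef, hQdef]; ring
  -- restriction to the original data on `Ici a`
  have hg0I : ∀ s, a ≤ s → g0 s = χ₀ s := fun s hs => by rw [hg0def]; exact if_pos hs
  have hg0dI : ∀ s, a ≤ s → g0d s = d0 s := fun s hs => by rw [hg0ddef]; exact if_pos hs
  have hg1I : ∀ s, a ≤ s → g1 s = χ₁ s := fun s hs => by rw [hg1def]; exact if_pos hs
  have hg1dI : ∀ s, a ≤ s → g1d s = d1 s := fun s hs => by rw [hg1ddef]; exact if_pos hs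
  -- uniform tension bounds for the data
  have hd0tail : Tendsto d0 atTop (𝓝 τ) := by rw [hd0def]; exact hdata.chi0_lim
  have hd1tail : Tendsto d1 atTop (𝓝 ζ) := by rw [hd1def]; exact hdata.chi1_lim
  have hd0gt : ∀ s ∈ Ici a, η < d0 s := fun s hs => by
    rw [hd0def, ← hdata.N0_eq s hs]; exact hdata.N0_gt s hs
  have hd0lt : ∀ s ∈ Ici a, d0 s < N₁ := fun s hs => by
    rw [hd0def, ← hdata.N0_eq s hs]; exact hdata.N0_lt s hs
  obtain ⟨η₂, N₂, hη₂, hN₂, hbounds⟩ := tail_bounds hd0c hd0tail hd0gt hd0lt hτη hτN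
  obtain ⟨M0, hM0⟩ := tail_bdd hd1c hd1tail
  obtain ⟨M, hMdef⟩ : ∃ x : ℝ, x = max M0 0 := ⟨_, rfl⟩
  have hM : 0 ≤ M := by rw [hMdef]; exact le_max_right _ _
  have hMb : ∀ s ∈ Ici a, |d1 s| ≤ M := fun s hs => by
    rw [hMdef]; exact le_trans (hM0 s hs) (le_max_left _ _)
  -- Lipschitz bound for χ₁ on `Ici a`
  have hχ₁lip : ∀ x ∈ Ici a, ∀ y ∈ Ici a, |χ₁ y - χ₁ x| ≤ M * |y - x| := by
    intro x hx y hy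
    have := (convex_Ici a).norm_image_sub_le_of_norm_hasDerivWithin_le
      (f' := d1) hd1_diff (fun u hu => by simpa using hMb u hu) hx hy
    simpa [Real.norm_eq_abs] using this
  -- the ODE for the shock front
  obtain ⟨num, hnumdef⟩ : ∃ f : ℝ × ℝ → ℝ,
    f = fun y => p' (y.1 + y.2) - q' (y.2 - y.1) := ⟨_, rfl⟩
  obtain ⟨den, hdendef⟩ : ∃ f : ℝ × ℝ → ℝ,
    f = fun y => N₁ - (p' (y.1 + y.2) + q' (y.2 - y.1)) := ⟨_, rfl⟩
  have hnumC1 : ContDiff ℝ 1 num := by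
    rw [hnumdef]
    exact (hp'C1.comp (contDiff_fst.add contDiff_snd)).sub
      (hq'C1.comp (contDiff_snd.sub contDiff_fst))
  have hdenC1 : ContDiff ℝ 1 den := by
    rw [hdendef]
    exact contDiff_const.sub ((hp'C1.comp (contDiff_fst.add contDiff_snd)).add
      (hq'C1.comp (contDiff_snd.sub contDiff_fst)))
  have haI : a ∈ Ici a := self_mem_Ici
  have hg0da : g0d a = d0 a := hg0dI a le_rfl
  have hden0 : den (0, a) = N₁ - d0 a := by
    rw [hdendef]
    simp only [zero_add, sub_zero]
    rw [hpq_add, hg0da]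
  have hnum0 : num (0, a) = χ₁ a := by
    rw [hnumdef]
    simp only [zero_add, sub_zero]
    rw [hpq_sub, hg1I a le_rfl]
  have hden0pos : 0 < den (0, a) := by
    rw [hden0]
    have := hd0lt a haI
    linarith
  have hσ₁gt : 1 < num (0, a) / den (0, a) := by
    rw [hnum0, hden0]
    have := hdata.speed
    rw [← hd0def] at this
    exact this
  -- solve the shock front ODE
  obtain ⟨v, hvdef⟩ : ∃ f : ℝ × ℝ → ℝ × ℝ,
    f = fun y => ((1 : ℝ), num y / den y) := ⟨_, rfl⟩
  have hv : ContDiffAt ℝ 1 v ((0 : ℝ), a) := by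
    rw [hvdef]
    exact contDiffAt_const.prodMk ((hnumC1.contDiffAt).div (hdenC1.contDiffAt) hden0pos.ne')
  obtain ⟨y, hy0, ε, hε, hyd⟩ := hv.exists_forall_mem_closedBall_exists_eq_forall_mem_Ioo_hasDerivAt₀ (0 : ℝ)
  simp only [zero_sub, zero_add] at hyd
  have hI0 : (0 : ℝ) ∈ Ioo (-ε) ε := ⟨by linarith, hε⟩
  -- the first component of the solution is the identity
  have hufst : ∀ t ∈ Ioo (-ε) ε, HasDerivAt (fun t => (y t).1 - t) 0 t := by
    intro t ht
    have h1 : HasDerivAt (fun t => (y t).1) ((v (y t)).1) t := by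
      have := (ContinuousLinearMap.fst ℝ ℝ ℝ).hasFDerivAt.comp_hasDerivAt t (hyd t ht)
      exact this
    have h2 : (v (y t)).1 = 1 := by rw [hvdef]
    rw [h2] at h1
    exact (h1.fun_sub (hasDerivAt_id t)).congr_deriv (sub_self 1)
  have hyfst : ∀ t ∈ Ioo (-ε) ε, (y t).1 = t := by
    intro t ht
    have hconst := (convex_Ioo (-ε) ε).is_const_of_fderivWithin_eq_zero
      (f := fun t => (y t).1 - t) (fun x hx => (hufst x hx).differentiableAt.differentiableWithinAt)
      (fun x hx => ?_) ht hI0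
    · have h0 : (y 0).1 = 0 := by rw [hy0]
      have h2 : (y t).1 - t = (y 0).1 - 0 := hconst
      rw [h0] at h2
      linarith
    · have hz := (hufst x hx).hasFDerivAt.hasFDerivWithinAt.fderivWithin
        (isOpen_Ioo.uniqueDiffOn x hx)
      rw [hz]
      ext u
      simp
  obtain ⟨σf, hσfdef⟩ : ∃ f : ℝ → ℝ, f = fun t => (y t).2 := ⟨_, rfl⟩
  have hσf0 : σf 0 = a := by rw [hσfdef]; simp only [hy0]
  have hyt : ∀ t ∈ Ioo (-ε) ε, y t = (t, σf t) := by
    intro t ht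
    rw [hσfdef]
    exact Prod.ext (hyfst t ht) rfl
  obtain ⟨w, hwdef⟩ : ∃ f : ℝ → ℝ, f = fun t => num (t, σf t) / den (t, σf t) := ⟨_, rfl⟩
  have hσd : ∀ t ∈ Ioo (-ε) ε, HasDerivAt σf (w t) t := by
    intro t ht
    have h1 : HasDerivAt (fun t => (y t).2) ((v (y t)).2) t := by
      have := (ContinuousLinearMap.snd ℝ ℝ ℝ).hasFDerivAt.comp_hasDerivAt t (hyd t ht)
      exact this
    have h2 : (v (y t)).2 = w t := by rw [hvdef, hwdef, hyt t ht]
    rw [h2] at h1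
    rw [hσfdef]
    exact h1
  -- choose a small interval on which the relevant quantities are controlled
  have hσfc0 : ContinuousAt σf 0 := (hσd 0 hI0).continuousAt
  have hcur : ContinuousAt (fun t => ((t, σf t) : ℝ × ℝ)) 0 := continuousAt_id.prodMk hσfc0
  have hcur0 : ((0 : ℝ), σf 0) = ((0 : ℝ), a) := by rw [hσf0]
  have hcden : ContinuousAt (fun t => den (t, σf t)) 0 := by
    refine ContinuousAt.comp ?_ hcur
    show ContinuousAt den ((0 : ℝ), σf 0)
    rw [hcur0]
    exact hdenC1.continuous.continuousAt
  have hcden0 : den (0, σf 0) = den (0, a) := by rw [hσf0]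
  have hev1 : ∀ᶠ t in 𝓝 (0 : ℝ), 0 < den (t, σf t) := by
    have h5 : (0 : ℝ) < den (0, σf 0) := by rw [hcden0]; exact hden0pos
    exact hcden.eventually (eventually_gt_nhds h5)
  have hcw : ContinuousAt w 0 := by
    rw [hwdef]
    refine ContinuousAt.div ?_ hcden ?_
    · refine ContinuousAt.comp ?_ hcur
      show ContinuousAt num ((0 : ℝ), σf 0)
      rw [hcur0]
      exact hnumC1.continuous.continuousAt
    · rw [hcden0]; exact hden0pos.ne'
  have hev2 : ∀ᶠ t in 𝓝 (0 : ℝ), 1 < w t := by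
    have h6 : 1 < w 0 := by
      rw [hwdef]
      show 1 < num (0, σf 0) / den (0, σf 0)
      rw [hσf0]
      exact hσ₁gt
    exact hcw.eventually (eventually_gt_nhds h6)
  have hev3 : ∀ᶠ t in 𝓝 (0 : ℝ), t ∈ Ioo (-ε) ε := by
    exact Ioo_mem_nhds hI0.1 hI0.2
  obtain ⟨δ, hδ, hδall⟩ := Metric.eventually_nhds_iff.1 ((hev1.and hev2).and hev3)
  -- the existence time
  obtain ⟨T, hTdef⟩ : ∃ x : ℝ,
    x = min (δ/2) (min ((η₂ - η)/(M+1)) ((N₁ - N₂)/(M+1))) := ⟨_, rfl⟩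
  have hT : 0 < T := by
    rw [hTdef]
    refine lt_min (by linarith) (lt_min ?_ ?_) <;>
      · apply div_pos <;> linarith
  have hTδ : T ≤ δ/2 := by rw [hTdef]; exact min_le_left _ _
  have hTm1 : T * (M + 1) ≤ η₂ - η := by
    have h1 : T ≤ (η₂ - η)/(M+1) := by
      rw [hTdef]; exact le_trans (min_le_right _ _) (min_le_left _ _)
    rw [div_eq_mul_inv] at h1
    have hM1 : 0 < M + 1 := by linarith
    calc T * (M+1) ≤ (η₂ - η) * (M+1)⁻¹ * (M+1) := by
          exact mul_le_mul_of_nonneg_right h1 hM1.le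
      _ = η₂ - η := by field_simp
  have hTm2 : T * (M + 1) ≤ N₁ - N₂ := by
    have h1 : T ≤ (N₁ - N₂)/(M+1) := by
      rw [hTdef]; exact le_trans (min_le_right _ _) (min_le_right _ _)
    have hM1 : 0 < M + 1 := by linarith
    rw [div_eq_mul_inv] at h1
    calc T * (M+1) ≤ (N₁ - N₂) * (M+1)⁻¹ * (M+1) := by
          exact mul_le_mul_of_nonneg_right h1 hM1.le
      _ = N₁ - N₂ := by field_simp
  have hgood : ∀ t ∈ Icc 0 T, (0 < den (t, σf t) ∧ 1 < w t) ∧ t ∈ Ioo (-ε) ε := by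
    intro t ht
    refine hδall ?_
    rw [Real.dist_eq, sub_zero, abs_of_nonneg ht.1]
    linarith [ht.2]
  have hsubI : Icc (0:ℝ) T ⊆ Ioo (-ε) ε := fun t ht => (hgood t ht).2
  have hσdT : ∀ t ∈ Icc 0 T, HasDerivAt σf (w t) t := fun t ht => hσd t (hsubI ht)
  have hwgt1 : ∀ t ∈ Icc 0 T, 1 < w t := fun t ht => (hgood t ht).1.2
  have hdenpos : ∀ t ∈ Icc 0 T, 0 < den (t, σf t) := fun t ht => (hgood t ht).1.1
  -- regularity and monotonicity of the front on [0,T]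
  have hσcontOn : ContinuousOn σf (Icc 0 T) := fun t ht =>
    ((hσdT t ht).continuousAt).continuousWithinAt
  have hmono_aux : MonotoneOn (fun t => σf t - t) (Icc 0 T) := by
    refine monotoneOn_of_deriv_nonneg (convex_Icc 0 T) ?_ ?_ ?_
    · exact hσcontOn.sub continuousOn_id
    · intro t ht
      rw [interior_Icc] at ht
      have hd9 : HasDerivAt (fun u => σf u - u) (w t - 1) t := by
        exact (hσdT t (Ioo_subset_Icc_self ht)).fun_sub (hasDerivAt_id t)
      exact hd9.differentiableAt.differentiableWithinAt
    · intro t ht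
      rw [interior_Icc] at ht
      have hd9 : HasDerivAt (fun u => σf u - u) (w t - 1) t := by
        exact (hσdT t (Ioo_subset_Icc_self ht)).fun_sub (hasDerivAt_id t)
      rw [hd9.deriv]
      have := hwgt1 t (Ioo_subset_Icc_self ht)
      linarith
  have hmono : ∀ t ∈ Icc (0:ℝ) T, ∀ t' ∈ Icc (0:ℝ) T, t ≤ t' → t' - t ≤ σf t' - σf t := by
    intro t ht t' ht' htt
    have h7 : σf t - t ≤ σf t' - t' := hmono_aux ht ht' htt
    linarith
  have hwcontOn : ContinuousOn w (Icc 0 T) := by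
    rw [hwdef]
    refine ContinuousOn.div ?_ ?_ (fun t ht => (hdenpos t ht).ne')
    · exact hnumC1.continuous.comp_continuousOn (continuousOn_id.prodMk hσcontOn)
    · exact hdenC1.continuous.comp_continuousOn (continuousOn_id.prodMk hσcontOn)
  obtain ⟨L0, hL0⟩ := (isCompact_Icc (a := (0:ℝ)) (b := T)).exists_bound_of_continuousOn hwcontOn
  obtain ⟨L, hLdef⟩ : ∃ x : ℝ, x = max L0 1 := ⟨_, rfl⟩
  have hLw : ∀ t ∈ Icc (0:ℝ) T, ‖w t‖ ≤ L := fun t ht => by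
    rw [hLdef]; exact le_trans (hL0 t ht) (le_max_left _ _)
  have hlip : ∀ t ∈ Icc (0:ℝ) T, ∀ t' ∈ Icc (0:ℝ) T, t ≤ t' →
      σf t' - σf t ≤ L * (t' - t) := by
    intro t ht t' ht' htt
    have h8 := (convex_Icc (0:ℝ) T).norm_image_sub_le_of_norm_hasDerivWithin_le
      (fun x hx => (hσdT x hx).hasDerivWithinAt) hLw ht ht'
    rw [Real.norm_eq_abs, Real.norm_eq_abs, abs_of_nonneg (by linarith : (0:ℝ) ≤ t' - t)] at h8
    exact le_trans (le_abs_self _) h8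
  -- front line bound
  have h0T : (0:ℝ) ∈ Icc (0:ℝ) T := ⟨le_rfl, hT.le⟩
  have hσsl : ∀ t ∈ Icc (0:ℝ) T, a + t ≤ σf t := by
    intro t ht
    have := hmono 0 h0T t ht ht.1
    rw [hσf0] at this
    linarith
  -- the clamped front
  obtain ⟨cl, hcldef⟩ : ∃ f : ℝ → ℝ, f = fun t => max 0 (min t T) := ⟨_, rfl⟩
  have hclmem : ∀ t, cl t ∈ Icc (0:ℝ) T := fun t => by
    rw [hcldef]
    exact ⟨le_max_left _ _, max_le hT.le (min_le_right _ _)⟩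
  have hclid : ∀ t ∈ Icc (0:ℝ) T, cl t = t := fun t ht => by
    rw [hcldef]
    show max 0 (min t T) = t
    rw [min_eq_left ht.2, max_eq_right ht.1]
  have hclcont : Continuous cl := by
    rw [hcldef]
    exact continuous_const.max (continuous_id.min continuous_const)
  obtain ⟨σc, hσcdef⟩ : ∃ f : ℝ → ℝ, f = fun t => σf (cl t) := ⟨_, rfl⟩
  have hσceq : ∀ t ∈ Icc (0:ℝ) T, σc t = σf t := fun t ht => by
    rw [hσcdef]
    show σf (cl t) = σf t
    rw [hclid t ht]
  have hσccont : Continuous σc := by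
    rw [hσcdef]
    refine continuous_iff_continuousAt.2 (fun x => ?_)
    exact ((hσd (cl x) (hsubI (hclmem x))).continuousAt).comp hclcont.continuousAt
  -- rewriting of num and den along the front
  have hnum_t : ∀ t : ℝ, num (t, σf t) = p' (σf t + t) - q' (σf t - t) := by
    intro t
    rw [hnumdef]
    show p' (t + σf t) - q' (σf t - t) = _
    rw [add_comm]
  have hden_t : ∀ t : ℝ, den (t, σf t) = N₁ - (p' (σf t + t) + q' (σf t - t)) := by
    intro t
    rw [hdendef]
    show N₁ - (p' (t + σf t) + q' (σf t - t)) = _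
    rw [add_comm t (σf t)]
  -- conservation of the jump condition: the front stays on the shock
  obtain ⟨Γ, hΓdef⟩ : ∃ f : ℝ → ℝ, f = fun t => pw P Q (σf t, t) - N₁ * σf t := ⟨_, rfl⟩
  have hΓd : ∀ t ∈ Icc (0:ℝ) T, HasDerivAt Γ 0 t := by
    intro t ht
    have hcv : HasDerivAt (fun u => ((σf u, u) : ℝ × ℝ)) (w t, 1) t :=
      (hσdT t ht).prodMk (hasDerivAt_id t)
    have hfd : HasFDerivAt (pw P Q) (p' (σf t + t) • Lpl + q' (σf t - t) • Lmi) (σf t, t) :=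
      pw_hasFDerivAt (hP _) (hQ _)
    have hcomp : HasDerivAt ((pw P Q) ∘ (fun u => ((σf u, u) : ℝ × ℝ)))
        ((p' (σf t + t) • Lpl + q' (σf t - t) • Lmi) ((w t, 1) : ℝ × ℝ)) t :=
      HasFDerivAt.comp_hasDerivAt t hfd hcv
    have hcomp' : HasDerivAt (fun u => pw P Q (σf u, u))
        ((p' (σf t + t) • Lpl + q' (σf t - t) • Lmi) ((w t, 1) : ℝ × ℝ)) t := hcomp
    clear hcomp
    rename' hcomp' => hcomp
    rw [Lcomb_apply] at hcomp
    have hall : HasDerivAt Γ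
        (p' (σf t + t) * ((w t) + 1) + q' (σf t - t) * ((w t) - 1) - N₁ * w t) t := by
      rw [hΓdef]
      exact hcomp.sub ((hσdT t ht).const_mul N₁)
    convert hall using 1
    have hD : den (t, σf t) ≠ 0 := (hdenpos t ht).ne'
    have hwmul : w t * den (t, σf t) = num (t, σf t) := by
      rw [hwdef]
      show num (t, σf t) / den (t, σf t) * den (t, σf t) = num (t, σf t)
      field_simp
    rw [hnum_t, hden_t] at hwmul
    linear_combination hwmul
  have hΓconst : ∀ t ∈ Icc (0:ℝ) T, Γ t = Γ 0 := by
    apply constant_of_derivWithin_zero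
    · exact fun t ht => (hΓd t ht).differentiableAt.differentiableWithinAt
    · intro t ht
      exact ((hΓd t (Ico_subset_Icc_self ht)).hasDerivWithinAt).derivWithin
        (uniqueDiffOn_Icc hT t (Ico_subset_Icc_self ht))
  have hΓ0 : Γ 0 = 0 := by
    rw [hΓdef]
    show pw P Q (σf 0, 0) - N₁ * σf 0 = 0
    rw [hσf0]
    show P (a + 0) + Q (a - 0) - N₁ * a = 0
    rw [add_zero, sub_zero, hPQ_add, hg0I a le_rfl, hdata.front]
    ring
  have hfrontPQ : ∀ t ∈ Icc (0:ℝ) T, pw P Q (σf t, t) = N₁ * σf t := by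
    intro t ht
    have h10 := hΓconst t ht
    rw [hΓ0] at h10
    have h11 : Γ t = pw P Q (σf t, t) - N₁ * σf t := congrFun hΓdef t
    rw [h10] at h11
    linarith
  -- uniqueness of derivatives on the extensible region
  have hlipc : ∀ t ∈ Icc (0:ℝ) T, ∀ t' ∈ Icc (0:ℝ) T, t ≤ t' →
      σc t' - σc t ≤ L * (t' - t) := by
    intro t ht t' ht' htt
    rw [hσceq t ht, hσceq t' ht']
    exact hlip t ht t' ht' htt
  have hmonoc : ∀ t ∈ Icc (0:ℝ) T, ∀ t' ∈ Icc (0:ℝ) T, t ≤ t' →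
      t' - t ≤ σc t' - σc t := by
    intro t ht t' ht' htt
    rw [hσceq t ht, hσceq t' ht']
    exact hmono t ht t' ht' htt
  have huE : UniqueDiffOn ℝ (Ereg σc T) := uniqueDiffOn_Ereg hT hlipc hmonoc
  -- geometry of the extensible region
  have hEgeom : ∀ p ∈ Ereg σc T, a ≤ p.1 - p.2 ∧ a ≤ p.1 + p.2 ∧ a ≤ p.1 := by
    rintro p ⟨hpt, hps⟩
    rw [hσceq p.2 hpt] at hps
    have h12 := hσsl p.2 hpt
    constructor
    · linarith
    constructor
    · linarith [hpt.1]
    · linarith [hpt.1]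
  -- uniform tension bounds on the extensible region
  have hNsbound : ∀ p ∈ Ereg σc T, η < pw p' q' p ∧ pw p' q' p < N₁ := by
    intro p hp
    obtain ⟨hb1, hb2, _⟩ := hEgeom p hp
    have ht2 := hp.1
    have e1 : pw p' q' p
        = (g0d (p.1+p.2) + g0d (p.1-p.2))/2 + (χ₁ (p.1+p.2) - χ₁ (p.1-p.2))/2 := by
      show p' (p.1+p.2) + q' (p.1-p.2) = _
      simp only [hp'def, hq'def]
      rw [hg1I _ hb2, hg1I _ hb1]
      ring
    have hA := hbounds _ hb2
    have hB := hbounds _ hb1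
    rw [hg0dI _ hb2, hg0dI _ hb1] at e1
    obtain ⟨hl1, hl2⟩ := abs_le.1 (hχ₁lip _ hb1 _ hb2)
    have habs : |p.1 + p.2 - (p.1 - p.2)| = 2 * p.2 := by
      rw [show p.1 + p.2 - (p.1 - p.2) = 2*p.2 by ring, abs_of_nonneg (by linarith [ht2.1])]
    rw [habs] at hl1 hl2
    have hMp : M * (2 * p.2) ≤ 2 * (T * M) := by
      have := mul_le_mul_of_nonneg_left ht2.2 hM
      nlinarith
    have hTM1 : T * M ≤ η₂ - η - T := by nlinarith [hTm1]
    have hTM2 : T * M ≤ N₁ - N₂ - T := by nlinarith [hTm2]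
    rw [e1]
    constructor
    · nlinarith [hA.1, hB.1, hT]
    · nlinarith [hA.2, hB.2, hT]
  -- the solution
  obtain ⟨χ, hχdef⟩ : ∃ f : ℝ → ℝ → ℝ,
    f = fun s t => if s ≤ σc t then N₁ * s else pw P Q (s, cl t) := ⟨_, rfl⟩
  obtain ⟨NN, hNNdef⟩ : ∃ f : ℝ → ℝ → ℝ,
    f = fun s t => if s < σc t
      then pw p' q' (σc t, t) + (derivWithin σc (Icc 0 T) t)^2 * (N₁ - pw p' q' (σc t, t))
      else pw p' q' (s, t) := ⟨_, rfl⟩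
  have huceq : uc χ
      = fun p : ℝ × ℝ => if p.1 ≤ σc p.2 then N₁ * p.1 else pw P Q (p.1, cl p.2) := by
    rw [hχdef]; rfl
  have hucNN : uc NN = fun p : ℝ × ℝ => if p.1 < σc p.2
      then pw p' q' (σc p.2, p.2) + (derivWithin σc (Icc 0 T) p.2)^2
        * (N₁ - pw p' q' (σc p.2, p.2))
      else pw p' q' p := by
    rw [hNNdef]
    funext p
    show (if p.1 < σc p.2 then pw p' q' (σc p.2, p.2) + (derivWithin σc (Icc 0 T) p.2)^2
        * (N₁ - pw p' q' (σc p.2, p.2)) else pw p' q' (p.1, p.2))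
      = (if p.1 < σc p.2 then pw p' q' (σc p.2, p.2) + (derivWithin σc (Icc 0 T) p.2)^2
        * (N₁ - pw p' q' (σc p.2, p.2)) else pw p' q' p)
    split_ifs with hcond
    · rfl
    · rfl
  have hσc0 : σc 0 = a := by rw [hσceq 0 h0T, hσf0]
  have hfrontc : ∀ t ∈ Icc (0:ℝ) T, pw P Q (σc t, t) = N₁ * σc t := by
    intro t ht
    rw [hσceq t ht]
    exact hfrontPQ t ht
  have hχE : ∀ p ∈ Ereg σc T, uc χ p = pw P Q p := by
    rintro p ⟨hpt, hps⟩
    rw [huceq]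
    show (if p.1 ≤ σc p.2 then N₁ * p.1 else pw P Q (p.1, cl p.2)) = pw P Q p
    have h30 : pw P Q (p.1, p.2) = pw P Q p := rfl
    rcases eq_or_lt_of_le hps with heq | hlt
    · rw [if_pos heq.ge, ← h30, ← heq, hfrontc p.2 hpt]
    · rw [if_neg (not_le.2 hlt), hclid p.2 hpt]
  have hNNE : ∀ p ∈ Ereg σc T, uc NN p = pw p' q' p := by
    rintro p ⟨hpt, hps⟩
    rw [hucNN]
    show (if p.1 < σc p.2 then _ else pw p' q' p) = pw p' q' p
    rw [if_neg (not_lt.2 hps)]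
  have hσcderiv : ∀ t ∈ Icc (0:ℝ) T, derivWithin σc (Icc 0 T) t = w t := by
    intro t ht
    have h13 : derivWithin σc (Icc 0 T) t = derivWithin σf (Icc 0 T) t :=
      derivWithin_congr (fun u hu => hσceq u hu) (hσceq t ht)
    rw [h13]
    exact ((hσdT t ht).hasDerivWithinAt).derivWithin (uniqueDiffOn_Icc hT t ht)
  have hpder : ∀ p ∈ Ereg σc T, ∀ vv : ℝ × ℝ,
      pder (uc χ) (Ereg σc T) vv p
        = p' (p.1+p.2) * (vv.1 + vv.2) + q' (p.1-p.2) * (vv.1 - vv.2) := by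
    intro p hp vv
    have hfd : HasFDerivAt (pw P Q) (p' (p.1+p.2) • Lpl + q' (p.1-p.2) • Lmi) p :=
      pw_hasFDerivAt (hP _) (hQ _)
    have hfdw : HasFDerivWithinAt (uc χ) (p' (p.1+p.2) • Lpl + q' (p.1-p.2) • Lmi)
        (Ereg σc T) p :=
      (hfd.hasFDerivWithinAt).congr (fun u hu => hχE u hu) (hχE p hp)
    rw [pder, hfdw.fderivWithin (huE p hp)]
    exact Lcomb_apply _ _ vv
  have hpder01 : ∀ p ∈ Ereg σc T,
      pder (uc χ) (Ereg σc T) (0,1) p = p' (p.1+p.2) - q' (p.1-p.2) := by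
    intro p hp
    rw [hpder p hp (0,1)]
    ring
  have hpder10 : ∀ p ∈ Ereg σc T,
      pder (uc χ) (Ereg σc T) (1,0) p = p' (p.1+p.2) + q' (p.1-p.2) := by
    intro p hp
    rw [hpder p hp (1,0)]
    ring
  obtain ⟨mq', hmq'def⟩ : ∃ f : ℝ → ℝ, f = fun x => - q' x := ⟨_, rfl⟩
  have hmq' : ∀ x, HasDerivAt mq' (- q'' x) x := fun x => by
    rw [hmq'def]; exact (hq' x).neg
  have ha0 : (0:ℝ) < a := hdata.sigma0_pos
  refine ⟨T, hT, χ, NN, σc, ?_⟩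
  constructor
  case chi_cont =>
    have hcontall : Continuous
        (fun p : ℝ × ℝ => if p.1 ≤ σc p.2 then N₁ * p.1 else pw P Q (p.1, cl p.2)) := by
      refine Continuous.if_le ?_ ?_ continuous_fst (hσccont.comp continuous_snd) ?_
      · exact continuous_const.mul continuous_fst
      · exact (pw_continuous hPC2.continuous hQC2.continuous).comp
          (continuous_fst.prodMk (hclcont.comp continuous_snd))
      · intro p hpeq
        have h15 : σc (cl p.2) = σc p.2 := by
          rw [hσcdef]
          show σf (cl (cl p.2)) = σf (cl p.2)
          rw [hclid _ (hclmem p.2)]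
        have h14 := hfrontc (cl p.2) (hclmem p.2)
        rw [h15] at h14
        rw [hpeq, ← h14]
    rw [huceq]
    exact hcontall.continuousOn
  case chit_bdd =>
    intro K
    obtain ⟨C, hC⟩ := ((isCompact_Icc (a := (0:ℝ)) (b := K)).prod
      (isCompact_Icc (a := (0:ℝ)) (b := T))).exists_bound_of_continuousOn
      (Continuous.continuousOn (f := fun p : ℝ × ℝ => p' (p.1+p.2) - q' (p.1-p.2))
        (by fun_prop))
    refine ⟨C, fun p hp hpK => ?_⟩
    rw [hpder01 p hp]
    have hmem : p ∈ Icc (0:ℝ) K ×ˢ Icc (0:ℝ) T := by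
      refine ⟨⟨?_, hpK⟩, hp.1⟩
      have := (hEgeom p hp).2.2
      linarith
    have := hC p hmem
    rwa [Real.norm_eq_abs] at this
  case N_bdd =>
    intro K
    obtain ⟨C1, hC1⟩ := ((isCompact_Icc (a := (0:ℝ)) (b := K)).prod
      (isCompact_Icc (a := (0:ℝ)) (b := T))).exists_bound_of_continuousOn
      ((pw_continuous hp'cont hq'cont).continuousOn)
    have hψcont : ContinuousOn (fun t => pw p' q' (σc t, t)
        + (w t)^2 * (N₁ - pw p' q' (σc t, t))) (Icc 0 T) := by
      have hbase : ContinuousOn (fun t => pw p' q' (σc t, t)) (Icc (0:ℝ) T) :=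
        (pw_continuous hp'cont hq'cont).comp_continuousOn
          (hσccont.continuousOn.prodMk continuousOn_id)
      exact hbase.add (((hwcontOn.pow 2)).mul (continuousOn_const.sub hbase))
    obtain ⟨C2, hC2⟩ := (isCompact_Icc (a := (0:ℝ)) (b := T)).exists_bound_of_continuousOn hψcont
    refine ⟨max C1 C2, fun s hs t ht => ?_⟩
    rw [hNNdef]
    show |if s < σc t then _ else pw p' q' (s, t)| ≤ max C1 C2
    rcases lt_or_ge s (σc t) with h | h
    · rw [if_pos h, hσcderiv t ht]
      refine le_max_of_le_right ?_
      have := hC2 t ht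
      rwa [Real.norm_eq_abs] at this
    · rw [if_neg (not_lt.2 h)]
      refine le_max_of_le_left ?_
      have := hC1 (s, t) ⟨hs, ht⟩
      rwa [Real.norm_eq_abs] at this
  case sigma_smooth =>
    have hσfC1 : ContDiffOn ℝ 1 σf (Icc 0 T) := by
      rw [show (1 : WithTop ℕ∞) = 0 + 1 by norm_num,
        contDiffOn_succ_iff_derivWithin (uniqueDiffOn_Icc hT)]
      refine ⟨fun t ht => (hσdT t ht).differentiableAt.differentiableWithinAt, by simp, ?_⟩
      rw [contDiffOn_zero]
      exact hwcontOn.congr (fun t ht =>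
        ((hσdT t ht).hasDerivWithinAt).derivWithin (uniqueDiffOn_Icc hT t ht))
    have hwC1 : ContDiffOn ℝ 1 w (Icc 0 T) := by
      rw [hwdef]
      refine ContDiffOn.div ?_ ?_ (fun t ht => (hdenpos t ht).ne')
      · exact hnumC1.comp_contDiffOn ((contDiffOn_id).prodMk hσfC1)
      · exact hdenC1.comp_contDiffOn ((contDiffOn_id).prodMk hσfC1)
    have hσfC2 : ContDiffOn ℝ 2 σf (Icc 0 T) := by
      rw [show (2 : WithTop ℕ∞) = 1 + 1 by norm_num,
        contDiffOn_succ_iff_derivWithin (uniqueDiffOn_Icc hT)]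
      refine ⟨fun t ht => (hσdT t ht).differentiableAt.differentiableWithinAt, by simp, ?_⟩
      exact hwC1.congr (fun t ht =>
        ((hσdT t ht).hasDerivWithinAt).derivWithin (uniqueDiffOn_Icc hT t ht))
    exact hσfC2.congr (fun t ht => hσceq t ht)
  case sigma_ge =>
    intro t ht
    rw [hσceq t ht]
    have := hσsl t ht
    linarith [ht.1]
  case sigma_init => exact hσc0
  case chi_smooth =>
    exact ((pw_contDiff hPC2 hQC2).contDiffOn).congr (fun p hp => hχE p hp)
  case N_smooth =>
    exact ((pw_contDiff hp'C1 hq'C1).contDiffOn).congr (fun p hp => hNNE p hp)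
  case N_eq =>
    intro p hp
    have h20 : NN p.1 p.2 = uc NN p := rfl
    rw [h20, hNNE p hp, hpder10 p hp]
    rfl
  case N_gt =>
    intro p hp
    have h20 : NN p.1 p.2 = uc NN p := rfl
    rw [h20, hNNE p hp]
    exact (hNsbound p hp).1
  case N_lt =>
    intro p hp
    have h20 : NN p.1 p.2 = uc NN p := rfl
    rw [h20, hNNE p hp]
    exact (hNsbound p hp).2
  case front =>
    intro t ht
    rw [hχdef]
    show (if σc t ≤ σc t then N₁ * σc t else _) = N₁ * σc t
    rw [if_pos le_rfl]
  case sigma_der =>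
    intro t ht
    have hmem : ((σc t, t) : ℝ × ℝ) ∈ Ereg σc T := ⟨ht, le_rfl⟩
    rw [hσcderiv t ht, hpder01 _ hmem]
    have h21 : NN (σc t) t = pw p' q' (σc t, t) := by
      rw [hNNdef]
      show (if σc t < σc t then _ else _) = _
      rw [if_neg (lt_irrefl _)]
    rw [h21]
    show w t = (p' (σc t + t) - q' (σc t - t)) / (N₁ - (p' (σc t + t) + q' (σc t - t)))
    rw [hσceq t ht, hwdef]
    show num (t, σf t) / den (t, σf t) = _
    rw [hnum_t, hden_t]
  case sigma_der_gt =>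
    intro t ht
    rw [hσcderiv t ht]
    exact hwgt1 t ht
  case inext_chi =>
    intro t ht s hs
    rw [hχdef]
    show (if s ≤ σc t then N₁ * s else _) = N₁ * s
    rw [if_pos hs.2]
  case inext_N =>
    intro t ht s hs
    have h21 : NN (σc t) t = pw p' q' (σc t, t) := by
      rw [hNNdef]
      show (if σc t < σc t then _ else _) = _
      rw [if_neg (lt_irrefl _)]
    rw [h21, hNNdef]
    show (if s < σc t then _ else _) = _
    rw [if_pos hs.2]
  case inext_N_gt =>
    intro t ht s hs
    have hmem : ((σc t, t) : ℝ × ℝ) ∈ Ereg σc T := ⟨ht, le_rfl⟩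
    have hlt := (hNsbound _ hmem).2
    have hw := hwgt1 t ht
    rw [hNNdef]
    show N₁ < (if s < σc t then pw p' q' (σc t, t)
      + (derivWithin σc (Icc 0 T) t)^2 * (N₁ - pw p' q' (σc t, t)) else _)
    rw [if_pos hs.2, hσcderiv t ht]
    nlinarith [mul_pos (show (0:ℝ) < w t^2 - 1 by nlinarith)
      (show (0:ℝ) < N₁ - pw p' q' (σc t, t) by linarith)]
  case wave =>
    intro p hp
    have hin1 : EqOn (pder (uc χ) (Ereg σc T) (0,1)) (pw p' mq') (Ereg σc T) := by
      intro u hu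
      rw [hpder01 u hu]
      show _ = p' (u.1+u.2) + mq' (u.1-u.2)
      rw [hmq'def]
      ring
    have hin2 : EqOn (pder (uc χ) (Ereg σc T) (1,0)) (pw p' q') (Ereg σc T) := by
      intro u hu
      rw [hpder10 u hu]
      rfl
    have hf1 : HasFDerivWithinAt (pw p' mq')
        (p'' (p.1+p.2) • Lpl + (- q'' (p.1-p.2)) • Lmi) (Ereg σc T) p :=
      (pw_hasFDerivAt (hp' _) (hmq' _)).hasFDerivWithinAt
    have hf2 : HasFDerivWithinAt (pw p' q')
        (p'' (p.1+p.2) • Lpl + q'' (p.1-p.2) • Lmi) (Ereg σc T) p :=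
      (pw_hasFDerivAt (hp' _) (hq' _)).hasFDerivWithinAt
    show pder _ _ _ p = pder _ _ _ p
    rw [pder, pder, fderivWithin_congr hin1 (hin1 hp), fderivWithin_congr hin2 (hin2 hp),
      hf1.fderivWithin (huE p hp), hf2.fderivWithin (huE p hp), Lcomb_apply, Lcomb_apply]
    ring
  case bc_infty =>
    intro t ht
    have hline : Tendsto (fun s : ℝ => s + t) atTop atTop :=
      tendsto_atTop_add_const_right atTop t tendsto_id
    have hline2 : Tendsto (fun s : ℝ => s - t) atTop atTop :=
      tendsto_atTop_add_const_right atTop (-t) tendsto_id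
    have h17 : Tendsto (fun s : ℝ => g0d (s+t)) atTop (𝓝 τ) := by
      refine Tendsto.congr' ?_ (hd0tail.comp hline)
      filter_upwards [eventually_ge_atTop (a - t)] with s hs
      exact (hg0dI (s + t) (by linarith : a ≤ s + t)).symm
    have h17' : Tendsto (fun s : ℝ => g0d (s-t)) atTop (𝓝 τ) := by
      refine Tendsto.congr' ?_ (hd0tail.comp hline2)
      filter_upwards [eventually_ge_atTop (a + t)] with s hs
      exact (hg0dI (s - t) (by linarith : a ≤ s - t)).symm
    have h18 : Tendsto (fun s : ℝ => g1 (s+t) - g1 (s-t)) atTop (𝓝 (2*ζ*t)) := by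
      rw [Metric.tendsto_atTop]
      intro ε' hε'
      have ht0 := ht.1
      have hpos : 0 < ε'/(2*t+1) := div_pos hε' (by linarith)
      obtain ⟨K0, hK0⟩ := Metric.tendsto_atTop.1 hd1tail (ε'/(2*t+1)) hpos
      refine ⟨max (K0 + t) (a + t), fun s hs => ?_⟩
      have hs1 : K0 ≤ s - t := by
        have := le_trans (le_max_left _ _) hs; linarith
      have hs2 : a ≤ s - t := by
        have := le_trans (le_max_right _ _) hs; linarith
      have hmem1 : s - t ∈ Ici (max K0 a) := by
        rw [mem_Ici, max_le_iff]; exact ⟨hs1, hs2⟩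
      have hmem2 : s + t ∈ Ici (max K0 a) := by
        rw [mem_Ici, max_le_iff]
        constructor <;> linarith
      have hder : ∀ u ∈ Ici (max K0 a),
          HasDerivWithinAt (fun u => χ₁ u - ζ*u) (d1 u - ζ) (Ici (max K0 a)) u := by
        intro u hu
        have h22 : HasDerivWithinAt χ₁ (d1 u) (Ici (max K0 a)) u :=
          (hd1_diff u (mem_Ici.2 (le_trans (le_max_right _ _) (mem_Ici.1 hu)))).mono
            (Ici_subset_Ici.2 (le_max_right _ _))
        have h23 : HasDerivWithinAt (fun u : ℝ => ζ * u) ζ (Ici (max K0 a)) u := by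
          simpa using ((hasDerivAt_id u).const_mul ζ).hasDerivWithinAt
        exact h22.sub h23
      have hbd : ∀ u ∈ Ici (max K0 a), ‖d1 u - ζ‖ ≤ ε'/(2*t+1) := by
        intro u hu
        rw [Real.norm_eq_abs]
        have h24 := hK0 u (le_trans (le_max_left _ _) (mem_Ici.1 hu))
        rw [Real.dist_eq] at h24
        exact h24.le
      have hmvt := (convex_Ici (max K0 a)).norm_image_sub_le_of_norm_hasDerivWithin_le
        hder hbd hmem1 hmem2
      rw [Real.norm_eq_abs, Real.norm_eq_abs] at hmvt
      rw [Real.dist_eq]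
      rw [hg1I _ (by linarith : a ≤ s + t), hg1I _ hs2]
      have h25 : |χ₁ (s+t) - χ₁ (s-t) - 2*ζ*t|
          = |(χ₁ (s+t) - ζ*(s+t)) - (χ₁ (s-t) - ζ*(s-t))| := by
        congr 1
        ring
      rw [h25]
      have h26 : |(s+t) - (s-t)| = 2*t := by
        rw [show (s+t) - (s-t) = 2*t by ring, abs_of_nonneg (by linarith)]
      rw [h26] at hmvt
      have h27 : ε'/(2*t+1) * (2*t) < ε' := by
        rw [div_mul_eq_mul_div, div_lt_iff₀ (by linarith)]
        nlinarith
      linarith [hmvt]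
    have hcomb : Tendsto (fun s : ℝ => (g0d (s+t) + g0d (s-t))/2 + (g1 (s+t) - g1 (s-t))/2)
        atTop (𝓝 ((τ + τ)/2 + (2*ζ*t)/2)) :=
      ((h17.add h17').div_const 2).add (h18.div_const 2)
    have hval : (τ+τ)/2 + (2*ζ*t)/2 = ζ*t+τ := by ring
    rw [hval] at hcomb
    refine Tendsto.congr' ?_ hcomb
    filter_upwards [eventually_ge_atTop (σc t)] with s hs
    have hpE : ((s,t) : ℝ×ℝ) ∈ Ereg σc T := ⟨ht, hs⟩
    rw [hpder10 (s,t) hpE]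
    show _ = p' (s+t) + q' (s-t)
    simp only [hp'def, hq'def]
    ring
  case init_chi =>
    intro s hs
    rw [hχdef]
    show (if s ≤ σc 0 then N₁ * s else pw P Q (s, cl 0)) = χ₀ s
    rw [hσc0]
    rcases eq_or_lt_of_le (mem_Ici.1 hs) with heq | hlt
    · rw [if_pos heq.ge, ← heq, hdata.front]
    · rw [if_neg (not_le.2 hlt), hclid 0 h0T]
      show P (s + 0) + Q (s - 0) = χ₀ s
      rw [add_zero, sub_zero, hPQ_add, hg0I s hs]
  case init_chit =>
    intro s hs
    have hmem : ((s, 0) : ℝ × ℝ) ∈ Ereg σc T := ⟨h0T, by rw [hσc0]; exact hs⟩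
    rw [hpder01 _ hmem]
    show p' (s + 0) - q' (s - 0) = χ₁ s
    rw [add_zero, sub_zero, hpq_sub, hg1I s hs]
end
end

section
/- Uniqueness of classical shock solutions (Theorem 3.3, uniqueness part): If (χ,N) with shock front σ and (χ̌,Ň) with shock front σ̌ are both classical shock solutions on the same time interval [0,T] with the same classical shock front initial data (χ₀,χ₁,N₀) and the same initial shock front σ₀, then σ(t) = σ̌(t) for all t ∈ [0,T] and (χ,N) = (χ̌,Ň) on [0,∞)×[0,T]. -/
open Set Filter Topology

noncomputable section

/-- Unique differentiability at a point that admits an open parallelogram inside the set. -/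
lemma uniqueDiffWithinAt_of_para (S : Set (ℝ × ℝ)) (p : ℝ × ℝ) (L ε d : ℝ) (hε : 0 < ε)
    (hd : d * d = 1)
    (hsub : ∀ a b : ℝ, a ∈ Ioo 0 ε → b ∈ Ioo 0 ε → (p.1 + a * L + b, p.2 + a * d) ∈ S) :
    UniqueDiffWithinAt ℝ S p := by
  have hdd : ∀ x : ℝ, x * d * d = x := fun x => by rw [mul_assoc, hd, mul_one]
  set P : Set (ℝ × ℝ) :=
    {q : ℝ × ℝ | (q.2 - p.2) * d ∈ Ioo 0 ε ∧ q.1 - p.1 - (q.2 - p.2) * d * L ∈ Ioo 0 ε} with hP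
  have hPS : P ⊆ S := by
    rintro q ⟨h1, h2⟩
    have := hsub ((q.2 - p.2) * d) (q.1 - p.1 - (q.2 - p.2) * d * L) h1 h2
    have hq : (p.1 + (q.2 - p.2) * d * L + (q.1 - p.1 - (q.2 - p.2) * d * L),
        p.2 + (q.2 - p.2) * d * d) = q := by
      ext
      · show p.1 + (q.2 - p.2) * d * L + (q.1 - p.1 - (q.2 - p.2) * d * L) = q.1; ring
      · show p.2 + (q.2 - p.2) * d * d = q.2; rw [hdd]; ring
    rwa [hq] at this
  have hPopen : IsOpen P := by
    have h1 : IsOpen {q : ℝ × ℝ | (q.2 - p.2) * d ∈ Ioo 0 ε} :=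
      (isOpen_Ioo).preimage (by fun_prop)
    have h2 : IsOpen {q : ℝ × ℝ | q.1 - p.1 - (q.2 - p.2) * d * L ∈ Ioo 0 ε} :=
      (isOpen_Ioo).preimage (by fun_prop)
    exact h1.inter h2
  have hPconv : Convex ℝ P := by
    rintro x ⟨hx1, hx2⟩ y ⟨hy1, hy2⟩ a b ha hb hab
    have hb' : b = 1 - a := by linarith
    subst hb'
    have e2 : (a • x + (1 - a) • y).2 = a * x.2 + (1 - a) * y.2 := rfl
    have e1 : (a • x + (1 - a) • y).1 = a * x.1 + (1 - a) * y.1 := rfl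
    constructor
    · have := (convex_Ioo (0:ℝ) ε) hx1 hy1 ha hb hab
      simp only [smul_eq_mul] at this
      have heq : ((a • x + (1 - a) • y).2 - p.2) * d
          = a * ((x.2 - p.2) * d) + (1 - a) * ((y.2 - p.2) * d) := by rw [e2]; ring
      rw [heq]; exact this
    · have := (convex_Ioo (0:ℝ) ε) hx2 hy2 ha hb hab
      simp only [smul_eq_mul] at this
      have heq : ((a • x + (1 - a) • y).1 - p.1 - ((a • x + (1 - a) • y).2 - p.2) * d * L)
          = a * (x.1 - p.1 - (x.2 - p.2) * d * L)
            + (1 - a) * (y.1 - p.1 - (y.2 - p.2) * d * L) := by rw [e1, e2]; ring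
      rw [heq]; exact this
  have hmemP : ∀ r : ℝ, r ∈ Ioo 0 ε → ((p.1 + r * L + r, p.2 + r * d) : ℝ × ℝ) ∈ P := by
    intro r hr
    constructor
    · show (p.2 + r * d - p.2) * d ∈ Ioo 0 ε
      have : (p.2 + r * d - p.2) * d = r := by
        have : (p.2 + r * d - p.2) * d = r * d * d := by ring
        rw [this, hdd]
      rw [this]; exact hr
    · show p.1 + r * L + r - p.1 - (p.2 + r * d - p.2) * d * L ∈ Ioo 0 ε
      have : p.1 + r * L + r - p.1 - (p.2 + r * d - p.2) * d * L = r := by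
        have h' : (p.2 + r * d - p.2) * d = r := by
          have : (p.2 + r * d - p.2) * d = r * d * d := by ring
          rw [this, hdd]
        rw [h']; ring
      rw [this]; exact hr
  have hpc : p ∈ closure P := by
    have hcont : Continuous (fun r : ℝ => ((p.1 + r * L + r, p.2 + r * d) : ℝ × ℝ)) := by
      fun_prop
    have htend : Tendsto (fun r : ℝ => ((p.1 + r * L + r, p.2 + r * d) : ℝ × ℝ))
        (𝓝[>] (0:ℝ)) (𝓝 p) := by
      have h0 := hcont.tendsto 0
      simp only [zero_mul, add_zero] at h0
      exact h0.mono_left nhdsWithin_le_nhds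
    refine mem_closure_of_tendsto htend ?_
    filter_upwards [Ioo_mem_nhdsGT_of_mem (by exact ⟨le_refl _, hε⟩ : (0:ℝ) ∈ Ico 0 ε)]
      with r hr using hmemP r hr
  have hint : (interior P).Nonempty := by
    rw [hPopen.interior_eq]
    exact ⟨_, hmemP (ε/2) ⟨by linarith, by linarith⟩⟩
  exact (uniqueDiffWithinAt_convex hPconv hint hpc).mono hPS



/-- The epigraph-type region above a Lipschitz front has unique differentiability. -/
lemma uniqueDiffOn_epi (T L : ℝ) (hT : 0 < T) (hL : 0 ≤ L) (f : ℝ → ℝ)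
    (hf : ∀ t₁ ∈ Icc (0:ℝ) T, ∀ t₂ ∈ Icc (0:ℝ) T, |f t₁ - f t₂| ≤ L * |t₁ - t₂|) :
    UniqueDiffOn ℝ {p : ℝ × ℝ | p.2 ∈ Icc 0 T ∧ f p.2 ≤ p.1} := by
  rintro p ⟨hpt, hps⟩
  rcases lt_or_eq_of_le hpt.2 with hlt | heq
  · -- p.2 < T : go upward (d = 1)
    refine uniqueDiffWithinAt_of_para _ p L (min (T - p.2) 1) 1 (by simp [hlt]) (one_mul 1) ?_
    intro a b ha hb
    have ht' : p.2 + a * 1 ∈ Icc (0:ℝ) T := by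
      constructor
      · have := hpt.1; nlinarith [ha.1]
      · have := ha.2; have : a < T - p.2 := lt_of_lt_of_le ha.2 (min_le_left _ _); linarith
    refine ⟨ht', ?_⟩
    have hlip := hf (p.2 + a * 1) ht' p.2 hpt
    have habs : |p.2 + a * 1 - p.2| = a := by rw [abs_of_nonneg] <;> [skip; nlinarith [ha.1]]; ring_nf
    rw [habs] at hlip
    have : f (p.2 + a * 1) ≤ f p.2 + L * a := by
      have := abs_sub_le_iff.1 hlip; linarith [this.1]
    show f (p.2 + a * 1) ≤ p.1 + a * L + b
    nlinarith [hb.1, hps]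
  · -- p.2 = T : go downward (d = -1)
    refine uniqueDiffWithinAt_of_para _ p L (min T 1) (-1) (by simp [hT]) (by ring) ?_
    intro a b ha hb
    have ht' : p.2 + a * (-1) ∈ Icc (0:ℝ) T := by
      constructor
      · have h1 : a < T := lt_of_lt_of_le ha.2 (min_le_left _ _)
        rw [heq]; linarith
      · have := hpt.2; nlinarith [ha.1]
    refine ⟨ht', ?_⟩
    have hlip := hf (p.2 + a * (-1)) ht' p.2 hpt
    have habs : |p.2 + a * (-1) - p.2| = a := by
      rw [abs_of_nonpos (by nlinarith [ha.1])]; ring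
    rw [habs] at hlip
    have : f (p.2 + a * (-1)) ≤ f p.2 + L * a := by
      have := abs_sub_le_iff.1 hlip; linarith [this.1]
    show f (p.2 + a * (-1)) ≤ p.1 + a * L + b
    nlinarith [hb.1, hps]

/-- A `C²` function on a compact interval is Lipschitz. -/
lemma lip_of_contDiffOn (T : ℝ) (hT : 0 < T) (σ : ℝ → ℝ)
    (hσ : ContDiffOn ℝ 2 σ (Icc 0 T)) :
    ∃ L : ℝ, 0 ≤ L ∧ ∀ t₁ ∈ Icc (0:ℝ) T, ∀ t₂ ∈ Icc (0:ℝ) T, |σ t₁ - σ t₂| ≤ L * |t₁ - t₂| := by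
  have hud : UniqueDiffOn ℝ (Icc (0:ℝ) T) := uniqueDiffOn_Icc hT
  have hdiff : DifferentiableOn ℝ σ (Icc 0 T) :=
    hσ.differentiableOn (by norm_num)
  have hd1 : ContDiffOn ℝ 1 (derivWithin σ (Icc 0 T)) (Icc 0 T) :=
    hσ.derivWithin hud (by norm_num)
  have hcont : ContinuousOn (derivWithin σ (Icc 0 T)) (Icc 0 T) := hd1.continuousOn
  obtain ⟨C, hC⟩ := (isCompact_Icc).exists_bound_of_continuousOn hcont
  refine ⟨max C 0, le_max_right _ _, fun t₁ h₁ t₂ h₂ => ?_⟩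
  have hb : ∀ x ∈ Icc (0:ℝ) T, ‖derivWithin σ (Icc 0 T) x‖ ≤ max C 0 :=
    fun x hx => le_trans (hC x hx) (le_max_left _ _)
  have := (convex_Icc (0:ℝ) T).norm_image_sub_le_of_norm_derivWithin_le hdiff hb h₂ h₁
  simpa [Real.norm_eq_abs] using this


/-- At an interior point, the within-region directional second derivative is the honest one. -/
lemma pder_pder_eq_fderiv2 (f : ℝ × ℝ → ℝ) (E : Set (ℝ × ℝ)) (hsm : ContDiffOn ℝ 2 f E)
    (p : ℝ × ℝ) (hp : E ∈ 𝓝 p) (v w : ℝ × ℝ) :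
    fderivWithin ℝ (fun q => fderivWithin ℝ f E q v) E p w
      = (fderiv ℝ (fderiv ℝ f) p w) v := by
  have hCA : ContDiffAt ℝ 2 f p := hsm.contDiffAt hp
  have hd : DifferentiableAt ℝ (fderiv ℝ f) p :=
    (hCA.fderiv_right (m := 1) (by norm_num)).differentiableAt one_ne_zero
  set c : ((ℝ × ℝ) →L[ℝ] ℝ) →L[ℝ] ℝ := ContinuousLinearMap.apply ℝ ℝ v with hc
  have h1 : HasFDerivAt (fun q => fderiv ℝ f q v)
      (c.comp (fderiv ℝ (fderiv ℝ f) p)) p := (c.hasFDerivAt).comp p hd.hasFDerivAt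
  have hintE : interior E ∈ 𝓝 p := isOpen_interior.mem_nhds (mem_interior_iff_mem_nhds.2 hp)
  have hEq : (fun q => fderivWithin ℝ f E q v) =ᶠ[𝓝 p] (fun q => fderiv ℝ f q v) := by
    filter_upwards [hintE] with q hq
    rw [fderivWithin_of_mem_nhds (mem_interior_iff_mem_nhds.1 hq)]
  calc fderivWithin ℝ (fun q => fderivWithin ℝ f E q v) E p w
      = fderiv ℝ (fun q => fderivWithin ℝ f E q v) p w := by
        rw [fderivWithin_of_mem_nhds hp]
    _ = fderiv ℝ (fun q => fderiv ℝ f q v) p w := by rw [hEq.fderiv_eq]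
    _ = (fderiv ℝ (fderiv ℝ f) p w) v := by rw [h1.fderiv]; rfl

/-- Symmetry of the honest second derivative for a `C²` function near a point. -/
lemma fderiv2_symm (f : ℝ × ℝ → ℝ) (E : Set (ℝ × ℝ)) (hsm : ContDiffOn ℝ 2 f E)
    (p : ℝ × ℝ) (hp : E ∈ 𝓝 p) (v w : ℝ × ℝ) :
    fderiv ℝ (fderiv ℝ f) p v w = fderiv ℝ (fderiv ℝ f) p w v :=
  (hsm.contDiffAt hp).isSymmSndFDerivAt (by norm_num) v w

/-- A front with speed `> 1` gains on characteristics. -/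
lemma front_gain (T : ℝ) (hT : 0 < T) (σ : ℝ → ℝ) (hσ : ContDiffOn ℝ 2 σ (Icc 0 T))
    (hder : ∀ t ∈ Icc (0:ℝ) T, 1 < derivWithin σ (Icc 0 T) t) :
    ∀ t₁ ∈ Icc (0:ℝ) T, ∀ t₂ ∈ Icc (0:ℝ) T, t₁ < t₂ → σ t₁ + (t₂ - t₁) < σ t₂ := by
  have hg : StrictMonoOn (fun t => σ t - t) (Icc (0:ℝ) T) := by
    apply strictMonoOn_of_deriv_pos (convex_Icc 0 T)
    · exact (hσ.continuousOn.sub continuousOn_id)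
    · intro x hx
      rw [interior_Icc] at hx
      have hnx : Icc (0:ℝ) T ∈ 𝓝 x := Icc_mem_nhds hx.1 hx.2
      have hda : DifferentiableAt ℝ σ x :=
        (hσ.contDiffAt hnx).differentiableAt (by norm_num)
      have : deriv (fun t => σ t - t) x = deriv σ x - 1 := by
        rw [deriv_fun_sub hda differentiableAt_fun_id]; simp
      rw [this, ← derivWithin_of_mem_nhds hnx]
      have := hder x (Ioo_subset_Icc_self hx)
      linarith
  intro t₁ h₁ t₂ h₂ hlt
  have := hg h₁ h₂ hlt
  simp only at this
  linarith

-- end base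
/-- Bilinear algebra: the two characteristic directions annihilate the wave operator. -/
lemma bilin_wave (D : (ℝ × ℝ) →L[ℝ] (ℝ × ℝ) →L[ℝ] ℝ)
    (hs : D ((1:ℝ),(0:ℝ)) ((0:ℝ),(1:ℝ)) = D ((0:ℝ),(1:ℝ)) ((1:ℝ),(0:ℝ)))
    (hw : D ((0:ℝ),(1:ℝ)) ((0:ℝ),(1:ℝ)) = D ((1:ℝ),(0:ℝ)) ((1:ℝ),(0:ℝ))) :
    D ((1:ℝ),(-1:ℝ)) ((1:ℝ),(1:ℝ)) = 0 ∧ D ((-1:ℝ),(-1:ℝ)) ((-1:ℝ),(1:ℝ)) = 0 := by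
  have e1 : ((1:ℝ),(-1:ℝ)) = ((1:ℝ),(0:ℝ)) - ((0:ℝ),(1:ℝ)) := by norm_num
  have e2 : ((1:ℝ),(1:ℝ)) = ((1:ℝ),(0:ℝ)) + ((0:ℝ),(1:ℝ)) := by norm_num
  have e3 : ((-1:ℝ),(-1:ℝ)) = -(((1:ℝ),(0:ℝ)) + ((0:ℝ),(1:ℝ))) := by norm_num [Prod.ext_iff]
  have e4 : ((-1:ℝ),(1:ℝ)) = ((0:ℝ),(1:ℝ)) - ((1:ℝ),(0:ℝ)) := by norm_num
  rw [e1, e2, e3, e4]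
  simp only [map_sub, map_add, map_neg, ContinuousLinearMap.sub_apply,
    ContinuousLinearMap.add_apply, ContinuousLinearMap.neg_apply, map_neg, map_sub, map_add]
  constructor <;> linarith [hs, hw]
/-- Two classical shock solutions agree above both shock fronts. -/
lemma chi_eq_above (N₁ η τ ζ σ₀ T : ℝ) (χ₀ χ₁ N₀ : ℝ → ℝ) (hT : 0 < T) (hσ₀ : 0 < σ₀)
    (χ N : ℝ → ℝ → ℝ) (σ : ℝ → ℝ) (χ' N' : ℝ → ℝ → ℝ) (σ' : ℝ → ℝ)
    (h : IsShockSolution N₁ η τ ζ σ₀ T χ₀ χ₁ N₀ χ N σ)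
    (h' : IsShockSolution N₁ η τ ζ σ₀ T χ₀ χ₁ N₀ χ' N' σ') :
    ∀ t ∈ Icc (0:ℝ) T, ∀ s : ℝ, σ t ≤ s → σ' t ≤ s → χ s t = χ' s t := by
  classical
  set E : Set (ℝ × ℝ) := Ereg σ T with hE
  set E' : Set (ℝ × ℝ) := Ereg σ' T with hE'
  set S : Set (ℝ × ℝ) := E ∩ E' with hS
  set u : ℝ × ℝ → ℝ := fun p => uc χ p - uc χ' p with hu
  -- basic front facts
  have hσc : ContinuousOn σ (Icc 0 T) := h.sigma_smooth.continuousOn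
  have hσ'c : ContinuousOn σ' (Icc 0 T) := h'.sigma_smooth.continuousOn
  have hgain : ∀ t₁ ∈ Icc (0:ℝ) T, ∀ t₂ ∈ Icc (0:ℝ) T, t₁ < t₂ → σ t₁ + (t₂ - t₁) < σ t₂ :=
    front_gain T hT σ h.sigma_smooth h.sigma_der_gt
  have hgain' : ∀ t₁ ∈ Icc (0:ℝ) T, ∀ t₂ ∈ Icc (0:ℝ) T, t₁ < t₂ → σ' t₁ + (t₂ - t₁) < σ' t₂ :=
    front_gain T hT σ' h'.sigma_smooth h'.sigma_der_gt
  -- Lipschitz constants and unique differentiability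
  obtain ⟨L₁, hL₁, hlip₁⟩ := lip_of_contDiffOn T hT σ h.sigma_smooth
  obtain ⟨L₂, hL₂, hlip₂⟩ := lip_of_contDiffOn T hT σ' h'.sigma_smooth
  set L : ℝ := max L₁ L₂ with hL
  have hL0 : 0 ≤ L := le_trans hL₁ (le_max_left _ _)
  have hlipσ : ∀ t₁ ∈ Icc (0:ℝ) T, ∀ t₂ ∈ Icc (0:ℝ) T, |σ t₁ - σ t₂| ≤ L * |t₁ - t₂| :=
    fun t₁ h₁ t₂ h₂ => le_trans (hlip₁ t₁ h₁ t₂ h₂)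
      (mul_le_mul_of_nonneg_right (le_max_left _ _) (abs_nonneg _))
  have hlipσ' : ∀ t₁ ∈ Icc (0:ℝ) T, ∀ t₂ ∈ Icc (0:ℝ) T, |σ' t₁ - σ' t₂| ≤ L * |t₁ - t₂| :=
    fun t₁ h₁ t₂ h₂ => le_trans (hlip₂ t₁ h₁ t₂ h₂)
      (mul_le_mul_of_nonneg_right (le_max_right _ _) (abs_nonneg _))
  have hudE : UniqueDiffOn ℝ E := uniqueDiffOn_epi T L hT hL0 σ hlipσ
  have hudE' : UniqueDiffOn ℝ E' := uniqueDiffOn_epi T L hT hL0 σ' hlipσ'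
  have hSepi : S = {p : ℝ × ℝ | p.2 ∈ Icc 0 T ∧ (fun t => max (σ t) (σ' t)) p.2 ≤ p.1} := by
    ext q
    simp only [hS, hE, hE', Set.mem_inter_iff, Ereg, Set.mem_setOf_eq, max_le_iff]
    tauto
  have hudS : UniqueDiffOn ℝ S := by
    rw [hSepi]
    refine uniqueDiffOn_epi T L hT hL0 (fun t => max (σ t) (σ' t)) (fun t₁ h₁ t₂ h₂ => ?_)
    calc |max (σ t₁) (σ' t₁) - max (σ t₂) (σ' t₂)|
        ≤ max (|σ t₁ - σ t₂|) (|σ' t₁ - σ' t₂|) := abs_max_sub_max_le_max _ _ _ _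
      _ ≤ L * |t₁ - t₂| := max_le (hlipσ t₁ h₁ t₂ h₂) (hlipσ' t₁ h₁ t₂ h₂)
  -- regularity of u
  have hSE : S ⊆ E := inter_subset_left
  have hSE' : S ⊆ E' := inter_subset_right
  have hu2 : ContDiffOn ℝ 2 u S :=
    ((h.chi_smooth.mono hSE).sub (h'.chi_smooth.mono hSE'))
  set Ψ : ℝ × ℝ → (ℝ × ℝ) →L[ℝ] ℝ := fderivWithin ℝ u S with hΨ
  have hΨc : ContinuousOn Ψ S := (hu2.fderivWithin (m := 1) hudS (by norm_num)).continuousOn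
  have hucS : ContinuousOn u S := hu2.continuousOn
  -- the open region strictly above both fronts
  set O : Set (ℝ × ℝ) := {p : ℝ × ℝ | 0 < p.2 ∧ p.2 < T ∧ σ p.2 < p.1 ∧ σ' p.2 < p.1} with hO
  have hOE : O ⊆ E := fun p hp => ⟨⟨hp.1.le, hp.2.1.le⟩, hp.2.2.1.le⟩
  have hOE' : O ⊆ E' := fun p hp => ⟨⟨hp.1.le, hp.2.1.le⟩, hp.2.2.2.le⟩
  have hOS : O ⊆ S := fun p hp => ⟨hOE hp, hOE' hp⟩
  have hOopen : IsOpen O := by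
    rw [isOpen_iff_mem_nhds]
    intro p hp
    obtain ⟨hp1, hp2, hp3, hp4⟩ := hp
    have hmem : Icc (0:ℝ) T ∈ 𝓝 p.2 := Icc_mem_nhds hp1 hp2
    have hσA : ContinuousAt σ p.2 := hσc.continuousAt hmem
    have hσ'A : ContinuousAt σ' p.2 := hσ'c.continuousAt hmem
    have hsnd : ContinuousAt (fun q : ℝ × ℝ => q.2) p := continuous_snd.continuousAt
    have e1 : ∀ᶠ q : ℝ × ℝ in 𝓝 p, 0 < q.2 := hsnd.eventually_mem (Ioi_mem_nhds hp1)
    have e2 : ∀ᶠ q : ℝ × ℝ in 𝓝 p, q.2 < T := hsnd.eventually_mem (Iio_mem_nhds hp2)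
    have hg : ContinuousAt (fun q : ℝ × ℝ => q.1 - σ q.2) p :=
      continuous_fst.continuousAt.sub (hσA.comp hsnd)
    have hg' : ContinuousAt (fun q : ℝ × ℝ => q.1 - σ' q.2) p :=
      continuous_fst.continuousAt.sub (hσ'A.comp hsnd)
    have e3 : ∀ᶠ q : ℝ × ℝ in 𝓝 p, 0 < q.1 - σ q.2 :=
      hg.eventually_mem (Ioi_mem_nhds (by show (0:ℝ) < _ - _; linarith))
    have e4 : ∀ᶠ q : ℝ × ℝ in 𝓝 p, 0 < q.1 - σ' q.2 :=
      hg'.eventually_mem (Ioi_mem_nhds (by show (0:ℝ) < _ - _; linarith))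
    filter_upwards [e1, e2, e3, e4] with q f1 f2 f3 f4
    exact ⟨f1, f2, by linarith, by linarith⟩
  have hEnp : ∀ p ∈ O, E ∈ 𝓝 p := fun p hp => Filter.mem_of_superset (hOopen.mem_nhds hp) hOE
  have hE'np : ∀ p ∈ O, E' ∈ 𝓝 p := fun p hp => Filter.mem_of_superset (hOopen.mem_nhds hp) hOE'
  have hSnp : ∀ p ∈ O, S ∈ 𝓝 p := fun p hp => Filter.mem_of_superset (hOopen.mem_nhds hp) hOS
  have hΨhon : ∀ p ∈ O, Ψ p = fderiv ℝ u p := fun p hp => fderivWithin_of_mem_nhds (hSnp p hp)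
  -- honest second derivative of u and the wave identity on O
  have hDu : ∀ p ∈ O, DifferentiableAt ℝ (fderiv ℝ u) p ∧
      fderiv ℝ (fderiv ℝ u) p ((1:ℝ),(-1:ℝ)) ((1:ℝ),(1:ℝ)) = 0 ∧
      fderiv ℝ (fderiv ℝ u) p ((-1:ℝ),(-1:ℝ)) ((-1:ℝ),(1:ℝ)) = 0 := by
    intro p hp
    have hEp := hEnp p hp
    have hE'p := hE'np p hp
    have hSp := hSnp p hp
    -- differentiability of the first derivatives
    have hdiffχ : DifferentiableAt ℝ (fderiv ℝ (uc χ)) p :=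
      (((h.chi_smooth.contDiffAt hEp).fderiv_right (m := 1)
        (by norm_num))).differentiableAt one_ne_zero
    have hdiffχ' : DifferentiableAt ℝ (fderiv ℝ (uc χ')) p :=
      (((h'.chi_smooth.contDiffAt hE'p).fderiv_right (m := 1)
        (by norm_num))).differentiableAt one_ne_zero
    -- fderiv u = fderiv χ - fderiv χ' near p
    have hEq' : (fderiv ℝ u) =ᶠ[𝓝 p]
        (fun q => fderiv ℝ (uc χ) q - fderiv ℝ (uc χ') q) := by
      filter_upwards [hOopen.mem_nhds hp] with q hq
      have h1 : DifferentiableAt ℝ (uc χ) q :=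
        (h.chi_smooth.contDiffAt (hEnp q hq)).differentiableAt (by norm_num)
      have h2 : DifferentiableAt ℝ (uc χ') q :=
        (h'.chi_smooth.contDiffAt (hE'np q hq)).differentiableAt (by norm_num)
      exact fderiv_sub h1 h2
    have hdiffu : DifferentiableAt ℝ (fderiv ℝ u) p := by
      rw [Filter.EventuallyEq.differentiableAt_iff hEq']
      exact hdiffχ.sub hdiffχ'
    have hDsplit : fderiv ℝ (fderiv ℝ u) p
        = fderiv ℝ (fderiv ℝ (uc χ)) p - fderiv ℝ (fderiv ℝ (uc χ')) p := by
      rw [hEq'.fderiv_eq, fderiv_fun_sub hdiffχ hdiffχ']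
    -- wave identities for χ and χ' (honest)
    have hwχ : fderiv ℝ (fderiv ℝ (uc χ)) p ((0:ℝ),(1:ℝ)) ((0:ℝ),(1:ℝ))
        = fderiv ℝ (fderiv ℝ (uc χ)) p ((1:ℝ),(0:ℝ)) ((1:ℝ),(0:ℝ)) := by
      have hw := h.wave p (hOE hp)
      rw [← hE] at hw
      have hpe1 : pder (uc χ) E ((0:ℝ),(1:ℝ)) = fun q => fderivWithin ℝ (uc χ) E q (0,1) := rfl
      have hpe2 : pder (uc χ) E ((1:ℝ),(0:ℝ)) = fun q => fderivWithin ℝ (uc χ) E q (1,0) := rfl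
      rw [hpe1, hpe2] at hw
      simp only [pder] at hw
      rwa [pder_pder_eq_fderiv2 (uc χ) E h.chi_smooth p hEp,
        pder_pder_eq_fderiv2 (uc χ) E h.chi_smooth p hEp] at hw
    have hwχ' : fderiv ℝ (fderiv ℝ (uc χ')) p ((0:ℝ),(1:ℝ)) ((0:ℝ),(1:ℝ))
        = fderiv ℝ (fderiv ℝ (uc χ')) p ((1:ℝ),(0:ℝ)) ((1:ℝ),(0:ℝ)) := by
      have hw := h'.wave p (hOE' hp)
      rw [← hE'] at hw
      have hpe1 : pder (uc χ') E' ((0:ℝ),(1:ℝ)) = fun q => fderivWithin ℝ (uc χ') E' q (0,1) := rfl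
      have hpe2 : pder (uc χ') E' ((1:ℝ),(0:ℝ)) = fun q => fderivWithin ℝ (uc χ') E' q (1,0) := rfl
      rw [hpe1, hpe2] at hw
      simp only [pder] at hw
      rwa [pder_pder_eq_fderiv2 (uc χ') E' h'.chi_smooth p hE'p,
        pder_pder_eq_fderiv2 (uc χ') E' h'.chi_smooth p hE'p] at hw
    have hwu : fderiv ℝ (fderiv ℝ u) p ((0:ℝ),(1:ℝ)) ((0:ℝ),(1:ℝ))
        = fderiv ℝ (fderiv ℝ u) p ((1:ℝ),(0:ℝ)) ((1:ℝ),(0:ℝ)) := by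
      rw [hDsplit]
      simp only [ContinuousLinearMap.sub_apply]
      linarith [hwχ, hwχ']
    have hsymm : fderiv ℝ (fderiv ℝ u) p ((1:ℝ),(0:ℝ)) ((0:ℝ),(1:ℝ))
        = fderiv ℝ (fderiv ℝ u) p ((0:ℝ),(1:ℝ)) ((1:ℝ),(0:ℝ)) :=
      fderiv2_symm u S hu2 p hSp _ _
    obtain ⟨hb1, hb2⟩ := bilin_wave (fderiv ℝ (fderiv ℝ u) p) hsymm hwu
    exact ⟨hdiffu, hb1, hb2⟩
  -- zero Cauchy data on the base
  have hbaseS : ∀ x : ℝ, σ₀ ≤ x → ((x, (0:ℝ)) : ℝ × ℝ) ∈ S := by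
    intro x hx
    have h0T : (0:ℝ) ∈ Icc (0:ℝ) T := ⟨le_refl _, hT.le⟩
    exact ⟨⟨h0T, by rw [h.sigma_init]; exact hx⟩, ⟨h0T, by rw [h'.sigma_init]; exact hx⟩⟩
  have hbase : ∀ x : ℝ, σ₀ ≤ x → u (x, 0) = 0 ∧ Ψ (x, 0) = 0 := by
    intro x hx
    have hmemS : ((x, (0:ℝ)) : ℝ × ℝ) ∈ S := hbaseS x hx
    have hmemE : ((x, (0:ℝ)) : ℝ × ℝ) ∈ E := hSE hmemS
    have hmemE' : ((x, (0:ℝ)) : ℝ × ℝ) ∈ E' := hSE' hmemS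
    have huval : ∀ y : ℝ, σ₀ ≤ y → u (y, 0) = 0 := by
      intro y hy
      have e1 := h.init_chi y hy
      have e2 := h'.init_chi y hy
      simp only [hu, uc]
      rw [e1, e2, sub_self]
    refine ⟨huval x hx, ?_⟩
    -- transfer of within-derivatives from E, E' to S
    have hdEx : DifferentiableWithinAt ℝ (uc χ) E (x, 0) :=
      (h.chi_smooth.differentiableOn (by norm_num)) _ hmemE
    have hdE'x : DifferentiableWithinAt ℝ (uc χ') E' (x, 0) :=
      (h'.chi_smooth.differentiableOn (by norm_num)) _ hmemE'
    have hXS : fderivWithin ℝ (uc χ) S (x, 0) = fderivWithin ℝ (uc χ) E (x, 0) :=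
      (hdEx.hasFDerivWithinAt.mono hSE).fderivWithin (hudS _ hmemS)
    have hXS' : fderivWithin ℝ (uc χ') S (x, 0) = fderivWithin ℝ (uc χ') E' (x, 0) :=
      (hdE'x.hasFDerivWithinAt.mono hSE').fderivWithin (hudS _ hmemS)
    have hΨsplit : Ψ (x, 0) = fderivWithin ℝ (uc χ) S (x, 0) - fderivWithin ℝ (uc χ') S (x, 0) := by
      rw [hΨ]
      exact fderivWithin_sub (hudS _ hmemS) (hdEx.mono hSE) (hdE'x.mono hSE')
    -- the (0,1) component vanishes by the initial condition for χ_t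
    have hc01 : Ψ (x, 0) ((0:ℝ),(1:ℝ)) = 0 := by
      have i1 := h.init_chit x hx
      have i2 := h'.init_chit x hx
      simp only [pder] at i1 i2
      rw [← hE] at i1
      rw [← hE'] at i2
      rw [hΨsplit]
      rw [ContinuousLinearMap.sub_apply, hXS, hXS', i1, i2, sub_self]
    -- the (1,0) component vanishes since u = 0 along the base
    have hc10 : Ψ (x, 0) ((1:ℝ),(0:ℝ)) = 0 := by
      have hudw : HasFDerivWithinAt u (Ψ (x, 0)) S (x, 0) :=
        ((hu2.differentiableOn (by norm_num)) _ hmemS).hasFDerivWithinAt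
      set ℓ : ℝ → ℝ × ℝ := fun y => (y, (0:ℝ)) with hℓ
      have hℓd : HasDerivWithinAt ℓ ((1:ℝ),(0:ℝ)) (Ici σ₀) x :=
        ((hasDerivAt_id x).prodMk (hasDerivAt_const x (0:ℝ))).hasDerivWithinAt
      have hmaps : MapsTo ℓ (Ici σ₀) S := fun y hy => hbaseS y hy
      have hcomp : HasDerivWithinAt (u ∘ ℓ) (Ψ (x, 0) ((1:ℝ),(0:ℝ))) (Ici σ₀) x :=
        hudw.comp_hasDerivWithinAt x hℓd hmaps
      have hzero : EqOn (u ∘ ℓ) (fun _ => (0:ℝ)) (Ici σ₀) := fun y hy => huval y hy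
      have hd1 : derivWithin (u ∘ ℓ) (Ici σ₀) x = Ψ (x, 0) ((1:ℝ),(0:ℝ)) :=
        hcomp.derivWithin (uniqueDiffOn_Ici σ₀ x hx)
      have hd2 : derivWithin (u ∘ ℓ) (Ici σ₀) x = 0 := by
        rw [derivWithin_congr hzero (huval x hx)]
        exact (hasDerivWithinAt_const x _ (0:ℝ)).derivWithin (uniqueDiffOn_Ici σ₀ x hx)
      rw [← hd1, hd2]
    -- conclude the full derivative vanishes
    refine ContinuousLinearMap.ext fun v => ?_
    have hv : (v : ℝ × ℝ) = v.1 • ((1:ℝ),(0:ℝ)) + v.2 • ((0:ℝ),(1:ℝ)) := by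
      ext <;> simp
    rw [hv, map_add, map_smul, map_smul, hc01, hc10]
    simp
  -- the key triangle argument : u vanishes on O
  have hkey : ∀ p ∈ O, u p = 0 := by
    rintro ⟨a, b⟩ hp
    obtain ⟨hb0, hbT, hσab, hσ'ab⟩ := hp
    simp only at hb0 hbT hσab hσ'ab
    have hbT' : b ∈ Icc (0:ℝ) T := ⟨hb0.le, hbT.le⟩
    set Δ : Set (ℝ × ℝ) := {q : ℝ × ℝ | 0 ≤ q.2 ∧ q.2 ≤ b ∧ |q.1 - a| ≤ b - q.2} with hΔ
    have hΔfront : ∀ q ∈ Δ, σ q.2 ≤ q.1 ∧ σ' q.2 ≤ q.1 ∧ (0 < q.2 → q ∈ O) := by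
      rintro q ⟨hq0, hqb, hqa⟩
      have hq2T : q.2 ∈ Icc (0:ℝ) T := ⟨hq0, le_trans hqb hbT.le⟩
      have habs := abs_le.1 hqa
      have hσq : σ q.2 < q.1 := by
        rcases eq_or_lt_of_le hqb with he | hl
        · have hq1 : q.1 = a := by rw [he] at habs; obtain ⟨u1, u2⟩ := habs; linarith
          rw [hq1, he]; exact hσab
        · have := hgain q.2 hq2T b hbT' hl
          linarith [habs.1]
      have hσ'q : σ' q.2 < q.1 := by
        rcases eq_or_lt_of_le hqb with he | hl
        · have hq1 : q.1 = a := by rw [he] at habs; obtain ⟨u1, u2⟩ := habs; linarith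
          rw [hq1, he]; exact hσ'ab
        · have := hgain' q.2 hq2T b hbT' hl
          linarith [habs.1]
      exact ⟨hσq.le, hσ'q.le, fun hq2 => ⟨hq2, lt_of_le_of_lt hqb hbT, hσq, hσ'q⟩⟩
    have hΔS : ∀ q ∈ Δ, q ∈ S := by
      intro q hq
      obtain ⟨h1, h2, _⟩ := hΔfront q hq
      have hq2T : q.2 ∈ Icc (0:ℝ) T := ⟨hq.1, le_trans hq.2.1 hbT.le⟩
      exact ⟨⟨hq2T, h1⟩, ⟨hq2T, h2⟩⟩
    have hΔbase : ∀ q ∈ Δ, q.2 = 0 → σ₀ ≤ q.1 := by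
      intro q hq hq2
      have := (hΔS q hq).1.2
      rwa [hq2, h.sigma_init] at this
    -- transport of a fixed directional derivative of Ψ along characteristics
    have htrans : ∀ (w : ℝ × ℝ) (sg : ℝ), |sg| = 1 →
        (∀ q ∈ O, fderiv ℝ (fderiv ℝ u) q ((sg, (-1:ℝ))) w = 0) →
        ∀ q ∈ Δ, Ψ q w = 0 := by
      intro w sg hsg hann q hq
      rcases eq_or_lt_of_le hq.1 with h0 | h0
      · have hqq : q = (q.1, (0:ℝ)) := by
          have : q.2 = 0 := h0.symm
          exact Prod.ext rfl this
        rw [hqq, (hbase q.1 (hΔbase q hq h0.symm)).2]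
        simp
      · set ρ : ℝ → ℝ × ℝ := fun r => ((q.1 + sg * r, q.2 - r) : ℝ × ℝ) with hρ
        have hρΔ : ∀ r ∈ Icc (0:ℝ) q.2, ρ r ∈ Δ := by
          rintro r ⟨hr0, hrq⟩
          refine ⟨by simp [hρ]; linarith, by simp [hρ]; linarith [hq.1, hq.2.1], ?_⟩
          have : |q.1 + sg * r - a| ≤ |q.1 - a| + |sg * r| := by
            have : q.1 + sg * r - a = (q.1 - a) + sg * r := by ring
            rw [this]; exact abs_add_le _ _
          have hsgr : |sg * r| = r := by rw [abs_mul, hsg, one_mul, abs_of_nonneg hr0]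
          simp only [hρ]
          calc |q.1 + sg * r - a| ≤ |q.1 - a| + |sg * r| := this
            _ = |q.1 - a| + r := by rw [hsgr]
            _ ≤ (b - q.2) + r := by linarith [hq.2.2]
            _ = b - (q.2 - r) := by ring
        have hρcont : Continuous ρ := by fun_prop
        set g : ℝ → ℝ := fun r => Ψ (ρ r) w with hg
        have hgc : ContinuousOn g (Icc 0 q.2) := by
          have h1 : ContinuousOn (fun r => Ψ (ρ r)) (Icc 0 q.2) :=
            hΨc.comp hρcont.continuousOn (fun r hr => hΔS _ (hρΔ r hr))
          exact h1.clm_apply continuousOn_const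
        have hgd : ∀ r ∈ Ico (0:ℝ) q.2, HasDerivWithinAt g 0 (Ici r) r := by
          rintro r ⟨hr0, hrq⟩
          set z : ℝ × ℝ := ρ r with hz
          have hzΔ : z ∈ Δ := hρΔ r ⟨hr0, hrq.le⟩
          have hzO : z ∈ O := (hΔfront z hzΔ).2.2 (by simp [hz, hρ]; linarith)
          obtain ⟨hdz, _, _⟩ := hDu z hzO
          have hρd : HasDerivAt ρ ((sg, (-1:ℝ)) : ℝ × ℝ) r := by
            have h1 : HasDerivAt (fun r : ℝ => q.1 + sg * r) sg r := by
              simpa using ((hasDerivAt_id r).const_mul sg).const_add q.1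
            have h2 : HasDerivAt (fun r : ℝ => q.2 - r) (-1 : ℝ) r := by
              simpa using (hasDerivAt_id r).const_sub q.2
            exact h1.prodMk h2
          set c : ((ℝ × ℝ) →L[ℝ] ℝ) →L[ℝ] ℝ := ContinuousLinearMap.apply ℝ ℝ w with hc
          have hinner : HasFDerivAt (fun q' => fderiv ℝ u q' w)
              (c.comp (fderiv ℝ (fderiv ℝ u) z)) z := (c.hasFDerivAt).comp z hdz.hasFDerivAt
          have hcomp : HasDerivAt (fun r' => fderiv ℝ u (ρ r') w)
              ((c.comp (fderiv ℝ (fderiv ℝ u) z)) ((sg, (-1:ℝ)))) r :=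
            by have := hinner.comp_hasDerivAt r hρd; exact this
          have hval : ((c.comp (fderiv ℝ (fderiv ℝ u) z)) ((sg, (-1:ℝ)))) = 0 := by
            have := hann z hzO
            simpa [hc] using this
          rw [hval] at hcomp
          have hev : g =ᶠ[𝓝 r] (fun r' => fderiv ℝ u (ρ r') w) := by
            filter_upwards [(hOopen.preimage hρcont).mem_nhds (by exact hzO)] with r' hr'
            rw [hg]
            simp only
            rw [hΨhon (ρ r') hr']
          exact (hcomp.congr_of_eventuallyEq hev).hasDerivWithinAt
        have hconst := constant_of_has_deriv_right_zero hgc hgd q.2 (right_mem_Icc.2 h0.le)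
        have hg0 : g 0 = Ψ q w := by
          have : ρ 0 = q := by rw [hρ]; ext <;> simp
          rw [hg]; simp only; rw [this]
        have hgq : g q.2 = 0 := by
          have hρq : ρ q.2 = (q.1 + sg * q.2, (0:ℝ)) := by rw [hρ]; ext <;> simp
          have hbb : σ₀ ≤ q.1 + sg * q.2 := by
            have h1 := hΔbase (ρ q.2) (hρΔ q.2 ⟨h0.le, le_refl _⟩) (by rw [hρ]; simp)
            rwa [hρq] at h1
          rw [hg]; simp only; rw [hρq, (hbase _ hbb).2]; simp
        rw [← hg0, ← hconst, hgq]
    -- the two characteristic families give Ψ (0,1) = 0 on Δ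
    have hW : ∀ q ∈ Δ, Ψ q ((1:ℝ),(1:ℝ)) = 0 :=
      htrans ((1:ℝ),(1:ℝ)) 1 (by norm_num) (fun q hq => (hDu q hq).2.1)
    have hV : ∀ q ∈ Δ, Ψ q ((-1:ℝ),(1:ℝ)) = 0 :=
      htrans ((-1:ℝ),(1:ℝ)) (-1) (by norm_num) (fun q hq => (hDu q hq).2.2)
    have hΨ01 : ∀ q ∈ Δ, Ψ q ((0:ℝ),(1:ℝ)) = 0 := by
      intro q hq
      have hadd : ((1:ℝ),(1:ℝ)) + ((-1:ℝ),(1:ℝ)) = ((2:ℝ) : ℝ) • (((0:ℝ),(1:ℝ)) : ℝ × ℝ) := by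
        norm_num [Prod.ext_iff]
      have := map_add (Ψ q) ((1:ℝ),(1:ℝ)) ((-1:ℝ),(1:ℝ))
      rw [hadd, map_smul, hW q hq, hV q hq] at this
      simp at this
      linarith [this]
    -- vertical integration gives u = 0 at the apex
    set φ : ℝ → ℝ := fun r => u (a, b - r) with hφ
    have hφΔ : ∀ r ∈ Icc (0:ℝ) b, ((a, b - r) : ℝ × ℝ) ∈ Δ := by
      rintro r ⟨hr0, hrb⟩
      refine ⟨by simp; linarith, by simp; linarith, by simp; linarith⟩
    have hφc : ContinuousOn φ (Icc 0 b) := by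
      have hpath : Continuous (fun r : ℝ => ((a, b - r) : ℝ × ℝ)) := by fun_prop
      exact hucS.comp hpath.continuousOn (fun r hr => hΔS _ (hφΔ r hr))
    have hφd : ∀ r ∈ Ico (0:ℝ) b, HasDerivWithinAt φ 0 (Ici r) r := by
      rintro r ⟨hr0, hrb⟩
      set z : ℝ × ℝ := ((a, b - r) : ℝ × ℝ) with hz
      have hzΔ : z ∈ Δ := hφΔ r ⟨hr0, hrb.le⟩
      have hzO : z ∈ O := (hΔfront z hzΔ).2.2 (by simp [hz]; linarith)
      have hud : DifferentiableAt ℝ u z :=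
        (hu2.contDiffAt (hSnp z hzO)).differentiableAt (by norm_num)
      have hρd : HasDerivAt (fun r : ℝ => ((a, b - r) : ℝ × ℝ)) (((0:ℝ), (-1:ℝ)) : ℝ × ℝ) r := by
        have h1 : HasDerivAt (fun _ : ℝ => a) (0:ℝ) r := hasDerivAt_const r a
        have h2 : HasDerivAt (fun r : ℝ => b - r) (-1 : ℝ) r := by
          simpa using (hasDerivAt_id r).const_sub b
        exact h1.prodMk h2
      have hcomp : HasDerivAt φ (fderiv ℝ u z ((0:ℝ),(-1:ℝ))) r :=
        by have := hud.hasFDerivAt.comp_hasDerivAt r hρd; exact this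
      have hval : fderiv ℝ u z ((0:ℝ),(-1:ℝ)) = 0 := by
        have hneg : (((0:ℝ),(-1:ℝ)) : ℝ × ℝ) = -(((0:ℝ),(1:ℝ)) : ℝ × ℝ) := by
          norm_num [Prod.ext_iff]
        rw [hneg, map_neg, ← hΨhon z hzO, hΨ01 z hzΔ, neg_zero]
      rw [hval] at hcomp
      exact hcomp.hasDerivWithinAt
    have hconst := constant_of_has_deriv_right_zero hφc hφd b (right_mem_Icc.2 hb0.le)
    have hφb : φ b = 0 := by
      rw [hφ]; simp only [sub_self]
      exact (hbase a (hΔbase ((a, 0) : ℝ × ℝ) (by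
        refine ⟨le_refl _, hb0.le, by simp; linarith⟩) rfl)).1
    have hφ0 : φ 0 = u (a, b) := by rw [hφ]; simp
    rw [← hφ0, ← hconst, hφb]
  -- closure argument
  intro t ht s hs hs'
  rcases eq_or_lt_of_le ht.1 with ht0 | ht0
  · have hsσ₀ : σ₀ ≤ s := by rw [← h.sigma_init, ht0]; exact hs
    have e1 := h.init_chi s hsσ₀
    have e2 := h'.init_chi s hsσ₀
    rw [ht0] at e1 e2
    rw [e1, e2]
  · -- 0 < t : approximate from inside O
    have hSBig : S ⊆ Ici (0:ℝ) ×ˢ Icc (0:ℝ) T := by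
      rintro p ⟨⟨hpt, hpσ⟩, -⟩
      exact ⟨le_of_lt (lt_of_lt_of_le hσ₀ (le_trans (h.sigma_ge p.2 hpt) hpσ)), hpt⟩
    set θ : ℝ → ℝ := fun r => t * (1 - r) with hθdef
    set m : ℝ → ℝ := fun r => max s (max (σ (θ r)) (σ' (θ r))) + r with hm
    set q : ℝ → ℝ × ℝ := fun r => ((m r, θ r) : ℝ × ℝ) with hq
    have hθIcc : ∀ r ∈ Ioo (0:ℝ) 1, θ r ∈ Icc (0:ℝ) T := by
      rintro r ⟨hr0, hr1⟩
      refine ⟨mul_nonneg ht0.le (by linarith), ?_⟩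
      exact le_trans (mul_le_of_le_one_right ht0.le (by linarith)) ht.2
    have hqO : ∀ r ∈ Ioo (0:ℝ) 1, q r ∈ O := by
      rintro r ⟨hr0, hr1⟩
      refine ⟨mul_pos ht0 (by linarith), ?_, ?_, ?_⟩
      · show θ r < T
        have : θ r < t := mul_lt_of_lt_one_right ht0 (by linarith)
        linarith [ht.2]
      · show σ (θ r) < m r
        have h1 : σ (θ r) ≤ max s (max (σ (θ r)) (σ' (θ r))) :=
          le_max_of_le_right (le_max_left _ _)
        simp only [hm]; linarith
      · show σ' (θ r) < m r
        have h1 : σ' (θ r) ≤ max s (max (σ (θ r)) (σ' (θ r))) :=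
          le_max_of_le_right (le_max_right _ _)
        simp only [hm]; linarith
    haveI hNB : (𝓝[Ioo (0:ℝ) 1] (0:ℝ)).NeBot := by
      refine mem_closure_iff_nhdsWithin_neBot.1 ?_
      rw [closure_Ioo (by norm_num : (0:ℝ) ≠ 1)]
      exact ⟨le_refl _, by norm_num⟩
    have hθtend : Tendsto θ (𝓝[Ioo (0:ℝ) 1] 0) (𝓝[Icc (0:ℝ) T] t) := by
      rw [tendsto_nhdsWithin_iff]
      constructor
      · have hc : Continuous θ := by fun_prop
        have := hc.tendsto 0
        have hθ0 : θ 0 = t := by simp [hθdef]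
        rw [hθ0] at this
        exact this.mono_left nhdsWithin_le_nhds
      · exact eventually_nhdsWithin_of_forall hθIcc
    have hσtend : Tendsto (fun r => σ (θ r)) (𝓝[Ioo (0:ℝ) 1] 0) (𝓝 (σ t)) :=
      (hσc t ht).tendsto.comp hθtend
    have hσ'tend : Tendsto (fun r => σ' (θ r)) (𝓝[Ioo (0:ℝ) 1] 0) (𝓝 (σ' t)) :=
      (hσ'c t ht).tendsto.comp hθtend
    have hmtend : Tendsto m (𝓝[Ioo (0:ℝ) 1] 0) (𝓝 s) := by
      have h1 : Tendsto (fun r => max s (max (σ (θ r)) (σ' (θ r))))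
          (𝓝[Ioo (0:ℝ) 1] 0) (𝓝 (max s (max (σ t) (σ' t)))) :=
        tendsto_const_nhds.max (hσtend.max hσ'tend)
      have h2 : max s (max (σ t) (σ' t)) = s := max_eq_left (max_le hs hs')
      rw [h2] at h1
      have h3 : Tendsto (fun r : ℝ => r) (𝓝[Ioo (0:ℝ) 1] 0) (𝓝 0) :=
        tendsto_id.mono_left nhdsWithin_le_nhds
      have := h1.add h3
      rw [add_zero] at this
      exact this
    have hqtend : Tendsto q (𝓝[Ioo (0:ℝ) 1] 0) (𝓝[Ici (0:ℝ) ×ˢ Icc (0:ℝ) T] ((s, t) : ℝ × ℝ)) := by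
      rw [tendsto_nhdsWithin_iff]
      constructor
      · exact hmtend.prodMk_nhds (hθtend.mono_right nhdsWithin_le_nhds)
      · exact eventually_nhdsWithin_of_forall
          (fun r hr => hSBig (hOS (hqO r hr)))
    have hucBig : ContinuousOn u (Ici (0:ℝ) ×ˢ Icc (0:ℝ) T) := h.chi_cont.sub h'.chi_cont
    have hstBig : ((s, t) : ℝ × ℝ) ∈ Ici (0:ℝ) ×ˢ Icc (0:ℝ) T :=
      ⟨le_of_lt (lt_of_lt_of_le hσ₀ (le_trans (h.sigma_ge t ht) hs)), ht⟩
    have hlim : Tendsto (u ∘ q) (𝓝[Ioo (0:ℝ) 1] 0) (𝓝 (u ((s, t) : ℝ × ℝ))) :=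
      (hucBig ((s, t) : ℝ × ℝ) hstBig).tendsto.comp hqtend
    have hzero : Tendsto (u ∘ q) (𝓝[Ioo (0:ℝ) 1] 0) (𝓝 0) := by
      apply Tendsto.congr' _ tendsto_const_nhds
      filter_upwards [eventually_nhdsWithin_of_forall hqO] with r hr
      exact (hkey (q r) hr).symm
    have huzero : u ((s, t) : ℝ × ℝ) = 0 := tendsto_nhds_unique hlim hzero
    have : uc χ ((s, t) : ℝ × ℝ) - uc χ' ((s, t) : ℝ × ℝ) = 0 := huzero
    simpa [uc, sub_eq_zero] using this
/-- The shock front of one solution cannot lag behind the other. -/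
lemma front_not_lt (N₁ η τ ζ σ₀ T : ℝ) (χ₀ χ₁ N₀ : ℝ → ℝ) (hσ₀ : 0 < σ₀)
    (χ N : ℝ → ℝ → ℝ) (σ : ℝ → ℝ) (χ' N' : ℝ → ℝ → ℝ) (σ' : ℝ → ℝ)
    (h : IsShockSolution N₁ η τ ζ σ₀ T χ₀ χ₁ N₀ χ N σ)
    (h' : IsShockSolution N₁ η τ ζ σ₀ T χ₀ χ₁ N₀ χ' N' σ')
    (hEq : ∀ t ∈ Icc (0:ℝ) T, ∀ s : ℝ, σ t ≤ s → σ' t ≤ s → χ s t = χ' s t)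
    (t : ℝ) (ht : t ∈ Icc (0:ℝ) T) : ¬ σ t < σ' t := by
  intro hlt
  set D : Set ℝ := Icc (σ t) (σ' t) with hD
  set g : ℝ → ℝ := fun x => N₁ * x - χ x t with hg
  have hℓc : Continuous (fun x : ℝ => ((x, t) : ℝ × ℝ)) := by fun_prop
  have hmaps : MapsTo (fun x : ℝ => ((x, t) : ℝ × ℝ)) D (Ici (0:ℝ) ×ˢ Icc (0:ℝ) T) := by
    intro x hx
    exact ⟨le_of_lt (lt_of_lt_of_le hσ₀ (le_trans (h.sigma_ge t ht) hx.1)), ht⟩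
  have hrowc : ContinuousOn (fun x => χ x t) D :=
    h.chi_cont.comp hℓc.continuousOn hmaps
  have hgc : ContinuousOn g D := (continuousOn_const.mul continuousOn_id).sub hrowc
  have hf' : ∀ x ∈ interior D, HasDerivWithinAt g (N₁ - N x t) (interior D) x := by
    intro x hx
    rw [hD, interior_Icc] at hx
    have hmemE : ((x, t) : ℝ × ℝ) ∈ Ereg σ T := ⟨ht, hx.1.le⟩
    have hNx : N x t = fderivWithin ℝ (uc χ) (Ereg σ T) (x, t) ((1:ℝ),(0:ℝ)) := by
      have := h.N_eq ((x, t) : ℝ × ℝ) hmemE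
      simpa [pder] using this
    have hFD : HasFDerivWithinAt (uc χ) (fderivWithin ℝ (uc χ) (Ereg σ T) ((x, t) : ℝ × ℝ))
        (Ereg σ T) ((x, t) : ℝ × ℝ) :=
      ((h.chi_smooth.differentiableOn (by norm_num)) _ hmemE).hasFDerivWithinAt
    have hℓd : HasDerivWithinAt (fun y : ℝ => ((y, t) : ℝ × ℝ)) (((1:ℝ),(0:ℝ)) : ℝ × ℝ)
        (interior D) x :=
      ((hasDerivAt_id x).prodMk (hasDerivAt_const x t)).hasDerivWithinAt
    have hmaps' : MapsTo (fun y : ℝ => ((y, t) : ℝ × ℝ)) (interior D) (Ereg σ T) := by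
      intro y hy
      rw [hD, interior_Icc] at hy
      exact ⟨ht, hy.1.le⟩
    have hrow : HasDerivWithinAt (fun y => χ y t)
        (fderivWithin ℝ (uc χ) (Ereg σ T) ((x, t) : ℝ × ℝ) ((1:ℝ),(0:ℝ)))
        (interior D) x := by have := hFD.comp_hasDerivWithinAt x hℓd hmaps'; exact this
    have hid : HasDerivWithinAt (fun y : ℝ => N₁ * y) N₁ (interior D) x := by
      simpa using ((hasDerivAt_id x).const_mul N₁).hasDerivWithinAt
    rw [hNx]
    exact hid.sub hrow
  have hpos : ∀ x ∈ interior D, 0 < N₁ - N x t := by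
    intro x hx
    rw [hD, interior_Icc] at hx
    have := h.N_lt ((x, t) : ℝ × ℝ) ⟨ht, hx.1.le⟩
    simp only at this
    linarith
  have hmono : StrictMonoOn g D :=
    strictMonoOn_of_hasDerivWithinAt_pos (convex_Icc _ _) hgc hf' hpos
  have hg1 : g (σ t) = 0 := by
    rw [hg]; simp only
    rw [h.front t ht]; ring
  have hg2 : g (σ' t) = 0 := by
    rw [hg]; simp only
    rw [hEq t ht (σ' t) hlt.le (le_refl _), h'.front t ht]; ring
  have := hmono (left_mem_Icc.2 hlt.le) (right_mem_Icc.2 hlt.le) hlt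
  rw [hg1, hg2] at this
  exact lt_irrefl 0 this
/-- Theorem 3.3 (uniqueness): two classical shock solutions on the same time interval
`[0,T]` with the same classical shock front initial data coincide: the shock fronts
agree on `[0,T]` and the state variables agree on `[0,∞) × [0,T]`. -/
theorem shock_solution_uniqueness
    (N₁ η τ ζ σ₀ T : ℝ) (χ₀ χ₁ N₀ : ℝ → ℝ)
    (hN₁ : 0 < N₁) (hη : 0 < η) (hηN : η < N₁) (hτη : η < τ) (hτN : τ < N₁) (hζ : 0 ≤ ζ)
    (hdata : IsShockData N₁ η τ ζ σ₀ χ₀ χ₁ N₀)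
    (χ N : ℝ → ℝ → ℝ) (σ : ℝ → ℝ) (χ' N' : ℝ → ℝ → ℝ) (σ' : ℝ → ℝ)
    (h : IsShockSolution N₁ η τ ζ σ₀ T χ₀ χ₁ N₀ χ N σ)
    (h' : IsShockSolution N₁ η τ ζ σ₀ T χ₀ χ₁ N₀ χ' N' σ') :
    ∀ t ∈ Icc (0 : ℝ) T, σ t = σ' t ∧
      ∀ s ∈ Ici (0 : ℝ), χ s t = χ' s t ∧ N s t = N' s t := by
  have hσ₀ : 0 < σ₀ := hdata.sigma0_pos
  rcases lt_trichotomy T 0 with hT | hT | hT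
  · intro t ht
    exact absurd (le_trans ht.1 ht.2) (not_le.2 hT)
  · -- T = 0 : the shock speed condition is contradictory at the isolated time 0
    exfalso
    have h0T : (0:ℝ) ∈ Icc (0:ℝ) T := ⟨le_refl _, hT.ge⟩
    have hgt := h.sigma_der_gt 0 h0T
    have hzero : derivWithin σ (Icc (0:ℝ) T) 0 = 0 := by
      apply derivWithin_zero_of_not_accPt
      rw [hT, Icc_self]
      have : ({(0:ℝ)} : Set ℝ) \ {0} = (∅ : Set ℝ) := diff_self
      rw [accPt_iff_nhds]; simp; exact ⟨univ, univ_mem⟩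
    rw [hzero] at hgt
    linarith
  · -- 0 < T
    have hEq := chi_eq_above N₁ η τ ζ σ₀ T χ₀ χ₁ N₀ hT hσ₀ χ N σ χ' N' σ' h h'
    have hEq' := chi_eq_above N₁ η τ ζ σ₀ T χ₀ χ₁ N₀ hT hσ₀ χ' N' σ' χ N σ h' h
    have hfront : ∀ t ∈ Icc (0:ℝ) T, σ t = σ' t := by
      intro t ht
      have h1 : ¬ σ t < σ' t :=
        front_not_lt N₁ η τ ζ σ₀ T χ₀ χ₁ N₀ hσ₀ χ N σ χ' N' σ' h h' hEq t ht
      have h2 : ¬ σ' t < σ t :=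
        front_not_lt N₁ η τ ζ σ₀ T χ₀ χ₁ N₀ hσ₀ χ' N' σ' χ N σ h' h
          (fun t' ht' s hs hs' => (hEq' t' ht' s hs hs')) t ht
      exact le_antisymm (not_lt.1 h2) (not_lt.1 h1)
    -- equality of the deformations everywhere
    have hχeq : ∀ t ∈ Icc (0:ℝ) T, ∀ s ∈ Ici (0:ℝ), χ s t = χ' s t := by
      intro t ht s hs0
      rcases le_or_gt s (σ t) with hle | hlt
      · rw [h.inext_chi t ht s ⟨hs0, hle⟩,
          h'.inext_chi t ht s ⟨hs0, by rw [← hfront t ht]; exact hle⟩]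
      · exact hEq t ht s hlt.le (by rw [← hfront t ht]; exact hlt.le)
    -- the regions coincide
    have hEE' : Ereg σ T = Ereg σ' T := by
      ext q
      constructor
      · rintro ⟨h1, h2⟩; exact ⟨h1, by rw [← hfront q.2 h1]; exact h2⟩
      · rintro ⟨h1, h2⟩; exact ⟨h1, by rw [hfront q.2 h1]; exact h2⟩
    have hEqOn : EqOn (uc χ) (uc χ') (Ereg σ T) := by
      rintro p ⟨h1, h2⟩
      have hp1 : p.1 ∈ Ici (0:ℝ) :=
        le_of_lt (lt_of_lt_of_le hσ₀ (le_trans (h.sigma_ge p.2 h1) h2))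
      exact hχeq p.2 h1 p.1 hp1
    -- equality of the tensions in the extensible region
    have hNabove : ∀ t ∈ Icc (0:ℝ) T, ∀ s : ℝ, σ t ≤ s → N s t = N' s t := by
      intro t ht s hle
      have hp : ((s, t) : ℝ × ℝ) ∈ Ereg σ T := ⟨ht, hle⟩
      have e1 := h.N_eq ((s, t) : ℝ × ℝ) hp
      have e2 := h'.N_eq ((s, t) : ℝ × ℝ) (hEE' ▸ hp)
      simp only [pder] at e1 e2
      rw [e1, e2, ← hEE',
        fderivWithin_congr hEqOn (hEqOn hp)]
    intro t ht
    refine ⟨hfront t ht, fun s hs0 => ⟨hχeq t ht s hs0, ?_⟩⟩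
    rcases le_or_gt (σ t) s with hle | hlt
    · exact hNabove t ht s hle
    · -- inextensible region
      have n1 := h.inext_N t ht s ⟨hs0, hlt⟩
      have n2 := h'.inext_N t ht s ⟨hs0, by rw [← hfront t ht]; exact hlt⟩
      have hder : derivWithin σ (Icc (0:ℝ) T) t = derivWithin σ' (Icc (0:ℝ) T) t :=
        derivWithin_congr hfront (hfront t ht)
      have hNfr : N (σ t) t = N' (σ' t) t := by
        rw [← hfront t ht]
        exact hNabove t ht (σ t) (le_refl _)
      rw [n1, n2, ← hfront t ht, hder, hNfr, ← hfront t ht]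
end
end

section
/- Finite speed of propagation identification (Proposition 3.4, first part): Suppose (χ,N) is a classical shock solution on a time interval [0,T) with shock front σ and initial data (χ₀,χ₁,N₀) with initial shock front σ₀, and let χ̄ be the unique C² solution of the wave equation χ̄_tt = χ̄_ss on the domain D = {(s,t) : t ≥ 0, s ≥ σ₀ + t} with χ̄(s,0) = χ₀(s) and χ̄_t(s,0) = χ₁(s) for s ≥ σ₀ (given by D'Alembert's formula χ̄(s,t) = ½(χ₀(s+t)+χ₀(s−t)) + ½∫_{s−t}^{s+t} χ₁(ξ)dξ). Then E_σ = {(s,t) : t ∈ [0,T), s ≥ σ(t)} is contained in D and χ = χ̄ on E_σ. -/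
open Set Filter Topology

noncomputable section

open intervalIntegral MeasureTheory in
private lemma ftc_left {h : ℝ → ℝ} {δ : ℝ} (hδ : 0 < δ) (hc : ContinuousOn h (Icc 0 δ)) :
    HasDerivWithinAt (fun r => ∫ q in (0:ℝ)..r, h q) (h 0) (Ici 0) 0 := by
  apply intervalIntegral.integral_hasDerivWithinAt_right (t := Ioi 0)
  · exact IntervalIntegrable.refl
  · exact ⟨Ioc 0 δ, Ioc_mem_nhdsGT_of_mem ⟨le_refl 0, hδ⟩,
      (hc.mono Ioc_subset_Icc_self).aestronglyMeasurable measurableSet_Ioc⟩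
  · have h1 : ContinuousWithinAt h (Icc 0 δ) 0 := hc 0 ⟨le_refl 0, hδ.le⟩
    refine h1.mono_left ?_
    rw [← nhdsWithin_Ioc_eq_nhdsGT hδ]
    exact nhdsWithin_mono 0 Ioc_subset_Icc_self

private lemma sigma_gain {σ : ℝ → ℝ} {T' : ℝ} (hσ : ContDiffOn ℝ 2 σ (Icc 0 T'))
    (hder : ∀ u ∈ Icc 0 T', 1 < derivWithin σ (Icc 0 T') u) :
    StrictMonoOn (fun u => σ u - u) (Icc 0 T') := by
  apply strictMonoOn_of_deriv_pos (convex_Icc 0 T')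
  · exact (hσ.continuousOn).sub continuousOn_id
  · intro x hx
    rw [interior_Icc] at hx
    have hxm : x ∈ Icc 0 T' := Ioo_subset_Icc_self hx
    have hnb : Icc 0 T' ∈ 𝓝 x := Icc_mem_nhds hx.1 hx.2
    have hdiff : DifferentiableAt ℝ σ x :=
      ((hσ.differentiableOn (by norm_num)) x hxm).differentiableAt hnb
    have h1 : deriv σ x = derivWithin σ (Icc 0 T') x := (derivWithin_of_mem_nhds hnb).symm
    have h2 : deriv (fun u => σ u - u) x = deriv σ x - 1 := by
      rw [deriv_fun_sub hdiff differentiableAt_fun_id]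
      simp
    rw [h2, h1]
    linarith [hder x hxm]

private lemma main_aux (N₁ η τ ζ σ₀ T' : ℝ) (χ₀ χ₁ N₀ : ℝ → ℝ)
    (hdata : IsShockData N₁ η τ ζ σ₀ χ₀ χ₁ N₀)
    (χ N : ℝ → ℝ → ℝ) (σ : ℝ → ℝ)
    (hs : IsShockSolution N₁ η τ ζ σ₀ T' χ₀ χ₁ N₀ χ N σ)
    (t : ℝ) (ht0 : 0 < t) (htT : t < T') (s : ℝ) (hst : σ t ≤ s) :
    σ₀ + t ≤ s ∧ χ s t = dAlem χ₀ χ₁ s t := by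
  have hT0 : 0 < T' := ht0.trans htT
  have htmem : t ∈ Icc 0 T' := ⟨ht0.le, htT.le⟩
  have hmono : StrictMonoOn (fun u => σ u - u) (Icc 0 T') :=
    sigma_gain hs.sigma_smooth hs.sigma_der_gt
  have hσ0 : σ 0 = σ₀ := hs.sigma_init
  have key1 : σ₀ + t ≤ s := by
    have h0 := hmono ⟨le_refl 0, hT0.le⟩ htmem ht0
    simp only [sub_zero] at h0
    rw [hσ0] at h0
    linarith
  refine ⟨key1, ?_⟩
  have hstt : σ₀ ≤ s - t := by linarith
  have hgain : ∀ u ∈ Ico (0:ℝ) t, σ u - u < s - t := by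
    intro u hu
    have := hmono ⟨hu.1, (hu.2.le.trans htT.le)⟩ htmem hu.2
    simp only at this
    linarith
  have hgain' : ∀ u ∈ Icc (0:ℝ) t, σ u - u ≤ s - t := by
    intro u hu
    rcases eq_or_lt_of_le hu.2 with h | h
    · subst h; linarith
    · exact (hgain u ⟨hu.1, h⟩).le
  set F := uc χ with hFdef
  set U : Set (ℝ×ℝ) := {p | p.2 ∈ Ioo 0 T' ∧ σ p.2 < p.1} with hUdef
  have hUopen : IsOpen U := by
    rw [isOpen_iff_mem_nhds]
    rintro p ⟨hp2, hp1⟩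
    have hct : ContinuousAt σ p.2 :=
      (hs.sigma_smooth.continuousOn p.2 (Ioo_subset_Icc_self hp2)).continuousAt
        (Icc_mem_nhds hp2.1 hp2.2)
    have hc1 : ContinuousAt (fun q : ℝ×ℝ => q.1 - σ q.2) p :=
      (continuous_fst.continuousAt).sub (hct.comp continuous_snd.continuousAt)
    have h1 : {q : ℝ×ℝ | σ q.2 < q.1} ∈ 𝓝 p := by
      have h0 : (0:ℝ) < p.1 - σ p.2 := by simpa using sub_pos.mpr hp1
      have := hc1.preimage_mem_nhds (Ioi_mem_nhds h0)
      filter_upwards [this] with q hq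
      simpa [sub_pos] using hq
    have h2 : {q : ℝ×ℝ | q.2 ∈ Ioo 0 T'} ∈ 𝓝 p :=
      (continuous_snd.continuousAt).preimage_mem_nhds (Ioo_mem_nhds hp2.1 hp2.2)
    filter_upwards [h1, h2] with q hq1 hq2
    exact ⟨hq2, hq1⟩
  have hUS : U ⊆ Ereg σ T' := fun p hp => ⟨Ioo_subset_Icc_self hp.1, hp.2.le⟩
  have hFC : ∀ p ∈ U, ContDiffAt ℝ 2 F p := fun p hp =>
    (hs.chi_smooth.mono hUS).contDiffAt (hUopen.mem_nhds hp)
  set A : ℝ×ℝ → (ℝ×ℝ) →L[ℝ] ℝ := fun p => fderiv ℝ F p with hAdef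
  have hUnhds : ∀ p ∈ U, Ereg σ T' ∈ 𝓝 p := fun p hp =>
    Filter.mem_of_superset (hUopen.mem_nhds hp) hUS
  have hpd : ∀ (v : ℝ×ℝ), ∀ p ∈ U, pder F (Ereg σ T') v p = A p v := by
    intro v p hp
    unfold pder
    rw [fderivWithin_of_mem_nhds (hUnhds p hp)]
  have hAdiff : ∀ p ∈ U, DifferentiableAt ℝ A p := by
    intro p hp
    exact ((hFC p hp).fderiv_right (m := 1) (by norm_num)).differentiableAt (by norm_num)
  have hsnd : ∀ p ∈ U, ∀ v w : ℝ×ℝ, fderiv ℝ (fun q => A q v) p w = fderiv ℝ A p w v := by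
    intro p hp v w
    have h1 : HasFDerivAt (fun q => A q v)
        ((ContinuousLinearMap.apply ℝ ℝ v).comp (fderiv ℝ A p)) p :=
      (ContinuousLinearMap.apply ℝ ℝ v).hasFDerivAt.comp p ((hAdiff p hp).hasFDerivAt)
    rw [h1.fderiv]
    rfl
  have hsym : ∀ p ∈ U, ∀ v w : ℝ×ℝ, fderiv ℝ A p v w = fderiv ℝ A p w v := by
    intro p hp v w
    have hev : ∀ᶠ q in 𝓝 p, HasFDerivAt F (A q) q := by
      filter_upwards [hUopen.mem_nhds hp] with q hq
      exact ((hFC q hq).differentiableAt two_ne_zero).hasFDerivAt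
    exact second_derivative_symmetric_of_eventually hev ((hAdiff p hp).hasFDerivAt) v w
  have hwaveU : ∀ p ∈ U,
      fderiv ℝ A p (0,1) (0,1) = fderiv ℝ A p (1,0) (1,0) := by
    intro p hp
    have h0 := hs.wave p (hUS hp)
    have key : ∀ v : ℝ×ℝ, pder (pder F (Ereg σ T') v) (Ereg σ T') v p = fderiv ℝ A p v v := by
      intro v
      have e1 : (fun q => fderivWithin ℝ F (Ereg σ T') q v) =ᶠ[𝓝[Ereg σ T'] p]
          (fun q => A q v) := by
        apply Filter.eventuallyEq_iff_exists_mem.mpr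
        exact ⟨U, nhdsWithin_le_nhds (hUopen.mem_nhds hp), fun q hq => hpd v q hq⟩
      have e2 : pder (pder F (Ereg σ T') v) (Ereg σ T') v p
          = fderivWithin ℝ (fun q => A q v) (Ereg σ T') p v := by
        unfold pder
        rw [e1.fderivWithin_eq (hpd v p hp)]
      rw [e2, fderivWithin_of_mem_nhds (hUnhds p hp), hsnd p hp]
    rw [key (0,1), key (1,0)] at h0
    exact h0
  -- the function χ_t - χ_s and its propagation along characteristics
  set W : ℝ×ℝ → ℝ := fun p => A p (0,1) - A p (1,0) with hWdef
  have hW : ∀ p ∈ U, ∃ D : (ℝ×ℝ) →L[ℝ] ℝ, HasFDerivAt W D p ∧ D (1,1) = 0 := by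
    intro p hp
    refine ⟨_, ((ContinuousLinearMap.apply ℝ ℝ ((0,1):ℝ×ℝ)).hasFDerivAt.comp p
        ((hAdiff p hp).hasFDerivAt)).sub
      ((ContinuousLinearMap.apply ℝ ℝ ((1,0):ℝ×ℝ)).hasFDerivAt.comp p
        ((hAdiff p hp).hasFDerivAt)), ?_⟩
    have h11 : ((1,1) : ℝ×ℝ) = (1,0) + (0,1) := by norm_num
    have e1 := hsym p hp (1,0) (0,1)
    have e2 := hwaveU p hp
    simp only [ContinuousLinearMap.sub_apply, ContinuousLinearMap.coe_comp',
      Function.comp_apply, ContinuousLinearMap.apply_apply, h11, map_add,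
      ContinuousLinearMap.add_apply]
    linarith
  have hWdiag : ∀ (y r : ℝ), ((y + r, r) : ℝ×ℝ) ∈ U →
      HasDerivAt (fun r : ℝ => W (y + r, r)) 0 r := by
    intro y r hmem
    obtain ⟨D, hD, hD0⟩ := hW _ hmem
    have hl : HasDerivAt (fun r : ℝ => ((y + r, r) : ℝ×ℝ)) (1,1) r :=
      ((hasDerivAt_id r).const_add y).prodMk (hasDerivAt_id r)
    have := HasFDerivAt.comp_hasDerivAt (f := fun r : ℝ => ((y + r, r) : ℝ×ℝ)) r hD hl
    rw [hD0] at this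
    exact this
  have hmemU : ∀ x u : ℝ, 0 < u → u < t → s - t ≤ x - u → ((x, u) : ℝ×ℝ) ∈ U := by
    intro x u hu hut hx
    refine ⟨⟨hu, hut.trans htT⟩, ?_⟩
    have := hgain u ⟨hu.le, hut⟩
    show σ u < x
    linarith
  set r0 : ℝ → ℝ := fun y => (s + t - y)/2 with hr0def
  set Wval : ℝ → ℝ := fun y => W (y + r0 y, r0 y) with hWvaldef
  have htrans : ∀ y ∈ Ioo (s-t) (s+t), ∀ u : ℝ, 0 < u → u ≤ r0 y → W (y + u, u) = Wval y := by
    intro y hy u hu hur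
    have hr0t : r0 y < t := by
      show (s + t - y)/2 < t
      linarith [hy.1]
    have hmem : ∀ r ∈ uIcc u (r0 y), ((y + r, r) : ℝ×ℝ) ∈ U := by
      intro r hr
      rw [uIcc_of_le hur] at hr
      refine hmemU _ _ (lt_of_lt_of_le hu hr.1) (lt_of_le_of_lt hr.2 hr0t) ?_
      simp only [add_sub_cancel_right]
      exact hy.1.le
    have hder : ∀ r ∈ uIcc u (r0 y), HasDerivAt (fun r => W (y + r, r)) ((fun _ => (0:ℝ)) r) r :=
      fun r hr => hWdiag y r (hmem r hr)
    have hint := intervalIntegral.integral_eq_sub_of_hasDerivAt hder intervalIntegrable_const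
    simp only [intervalIntegral.integral_const, smul_zero, smul_eq_mul, mul_zero] at hint
    have h0 : (0:ℝ) = W (y + r0 y, r0 y) - W (y + u, u) := by simpa using hint
    have hv : Wval y = W (y + r0 y, r0 y) := rfl
    linarith
  have hAcont : ContinuousOn A U :=
    (hs.chi_smooth.mono hUS).continuousOn_fderiv_of_isOpen hUopen (by norm_num)
  have hWcont : ContinuousOn W U :=
    (hAcont.clm_apply continuousOn_const).sub (hAcont.clm_apply continuousOn_const)
  have hPmem : ∀ y ∈ Ioo (s-t) (s+t), ((y + r0 y, r0 y) : ℝ×ℝ) ∈ U := by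
    intro y hy
    have h1 : 0 < r0 y := by show (0:ℝ) < (s + t - y)/2; linarith [hy.2]
    have h2 : r0 y < t := by show (s + t - y)/2 < t; linarith [hy.1]
    refine hmemU _ _ h1 h2 ?_
    simp only [add_sub_cancel_right]
    exact hy.1.le
  have hWvalcont : ContinuousOn Wval (Ioo (s-t) (s+t)) := by
    refine hWcont.comp ?_ hPmem
    apply Continuous.continuousOn
    fun_prop
  have hχ₀' : ∀ ξ ∈ Ici σ₀, HasDerivWithinAt χ₀ (derivWithin χ₀ (Ici σ₀) ξ) (Ici σ₀) ξ :=
    fun ξ hξ => ((hdata.chi0_smooth.differentiableOn (by norm_num)) ξ hξ).hasDerivWithinAt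
  -- identification of the transported quantity on the initial line
  have hWvalid : ∀ ξ ∈ Ioo (s-t) (s+t), Wval ξ = χ₁ ξ - derivWithin χ₀ (Ici σ₀) ξ := by
    intro ξ hξ
    obtain ⟨hξ1, hξ2⟩ := hξ
    have hξσ : σ₀ < ξ := lt_of_le_of_lt hstt hξ1
    set δ : ℝ := min ((ξ - (s - t))/3) (t/2) with hδdef
    have hδpos : 0 < δ := lt_min (by linarith) (by linarith)
    have hδ1 : 3*δ ≤ ξ - (s-t) := by
      have := min_le_left ((ξ - (s - t))/3) (t/2); linarith
    have hδ2 : δ ≤ t/2 := min_le_right _ _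
    have hmapS : MapsTo (fun r : ℝ => ((ξ - r, r) : ℝ×ℝ)) (Icc 0 δ) (Ereg σ T') := by
      intro r hr
      refine ⟨⟨hr.1, by linarith [hr.2]⟩, ?_⟩
      have hrt : r ≤ t := by linarith [hr.2]
      have := hgain' r ⟨hr.1, hrt⟩
      show σ r ≤ ξ - r
      linarith [hr.2]
    have hmem0 : ((ξ:ℝ), (0:ℝ)) ∈ Ereg σ T' := by
      refine ⟨⟨le_refl 0, hT0.le⟩, ?_⟩
      show σ 0 ≤ ξ
      rw [hσ0]; linarith
    have hL : HasFDerivWithinAt F (fderivWithin ℝ F (Ereg σ T') (ξ, 0)) (Ereg σ T') (ξ, 0) :=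
      ((hs.chi_smooth.differentiableOn (by norm_num)) _ hmem0).hasFDerivWithinAt
    set L := fderivWithin ℝ F (Ereg σ T') (ξ, 0) with hLdef
    have hL01 : L (0,1) = χ₁ ξ := hs.init_chit ξ (le_of_lt hξσ)
    have hL10 : L (1,0) = derivWithin χ₀ (Ici σ₀) ξ := by
      have hmapH : MapsTo (fun x : ℝ => ((x, (0:ℝ)) : ℝ×ℝ)) (Ici σ₀) (Ereg σ T') := by
        intro x hx
        exact ⟨⟨le_refl 0, hT0.le⟩, by show σ 0 ≤ x; rw [hσ0]; exact hx⟩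
      have hline : HasDerivAt (fun x : ℝ => ((x, (0:ℝ)) : ℝ×ℝ)) (1, 0) ξ :=
        (hasDerivAt_id ξ).prodMk (hasDerivAt_const ξ 0)
      have hcomp : HasDerivWithinAt (fun x => F (x, 0)) (L (1,0)) (Ici σ₀) ξ :=
        HasFDerivWithinAt.comp_hasDerivWithinAt (f := fun x : ℝ => ((x, (0:ℝ)) : ℝ×ℝ))
          ξ hL (hline.hasDerivWithinAt) hmapH
      have hcongr : HasDerivWithinAt χ₀ (L (1,0)) (Ici σ₀) ξ := by
        refine hcomp.congr (fun x hx => ?_) ?_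
        · exact (hs.init_chi x hx).symm
        · exact (hs.init_chi ξ (le_of_lt hξσ)).symm
      exact ((hcongr.derivWithin ((uniqueDiffOn_Ici σ₀) ξ (le_of_lt hξσ)))).symm
    set f : ℝ → ℝ := fun r => F (ξ - r, r) with hfdef
    have hf0 : HasDerivWithinAt f (χ₁ ξ - derivWithin χ₀ (Ici σ₀) ξ) (Icc 0 δ) 0 := by
      have hline2 : HasDerivAt (fun r : ℝ => ((ξ - r, r) : ℝ×ℝ)) (-1, 1) 0 :=
        ((hasDerivAt_id 0).const_sub ξ).prodMk (hasDerivAt_id 0)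
      have h00 : ((fun r : ℝ => ((ξ - r, r) : ℝ×ℝ)) 0) = ((ξ:ℝ), (0:ℝ)) := by norm_num
      have hL' : HasFDerivWithinAt F L (Ereg σ T') ((fun r : ℝ => ((ξ - r, r) : ℝ×ℝ)) 0) := by
        rw [h00]; exact hL
      have hcomp : HasDerivWithinAt f (L (-1,1)) (Icc 0 δ) 0 :=
        HasFDerivWithinAt.comp_hasDerivWithinAt (f := fun r : ℝ => ((ξ - r, r) : ℝ×ℝ))
          0 hL' (hline2.hasDerivWithinAt) hmapS
      have hLval : L (-1,1) = χ₁ ξ - derivWithin χ₀ (Ici σ₀) ξ := by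
        have h2 : ((-1,1) : ℝ×ℝ) = (0,1) - (1,0) := by norm_num
        rw [h2, map_sub, hL01, hL10]
      rwa [hLval] at hcomp
    set h : ℝ → ℝ := fun q => Wval (ξ - 2*q) with hhdef
    have hharg : ∀ q ∈ Icc (0:ℝ) δ, ξ - 2*q ∈ Ioo (s-t) (s+t) := by
      intro q hq
      constructor
      · linarith [hq.2]
      · linarith [hq.1]
    have hhcont : ContinuousOn h (Icc 0 δ) := by
      refine hWvalcont.comp ?_ hharg
      apply Continuous.continuousOn; fun_prop
    have hfder : ∀ r ∈ Ioo (0:ℝ) δ, HasDerivWithinAt f (h r) (Ioi r) r := by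
      intro r hr
      have hrt : r < t := by linarith [hr.2]
      have hmemU' : ((ξ - r, r) : ℝ×ℝ) ∈ U := by
        refine hmemU _ _ hr.1 hrt ?_
        have : 2*r ≤ ξ - (s-t) := by linarith [hr.2]
        linarith
      have hFd : HasFDerivAt F (A (ξ - r, r)) (ξ - r, r) :=
        ((hFC _ hmemU').differentiableAt two_ne_zero).hasFDerivAt
      have hline3 : HasDerivAt (fun q : ℝ => ((ξ - q, q) : ℝ×ℝ)) (-1, 1) r :=
        ((hasDerivAt_id r).const_sub ξ).prodMk (hasDerivAt_id r)
      have hcomp : HasDerivAt f (A (ξ - r, r) (-1,1)) r :=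
        HasFDerivAt.comp_hasDerivAt (f := fun q : ℝ => ((ξ - q, q) : ℝ×ℝ)) r hFd hline3
      have hval : A (ξ - r, r) (-1,1) = h r := by
        have hW' : A (ξ - r, r) (-1,1) = W (ξ - r, r) := by
          rw [show ((-1,1):ℝ×ℝ) = (0,1) - (1,0) by norm_num, map_sub]
        rw [hW']
        have hy : ξ - 2*r ∈ Ioo (s-t) (s+t) := hharg r ⟨hr.1.le, hr.2.le⟩
        have hur : r ≤ r0 (ξ - 2*r) := by
          show r ≤ (s + t - (ξ - 2*r))/2
          linarith
        have := htrans (ξ - 2*r) hy r hr.1 hur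
        rw [show ξ - 2*r + r = ξ - r by ring] at this
        exact this
      rw [hval] at hcomp
      exact hcomp.hasDerivWithinAt
    have hfcont : ContinuousOn f (Icc 0 δ) := by
      have hmapP : MapsTo (fun r : ℝ => ((ξ - r, r) : ℝ×ℝ)) (Icc 0 δ) (Ici 0 ×ˢ Icc 0 T') := by
        intro r hr
        constructor
        · show (0:ℝ) ≤ ξ - r
          have : σ r ≤ ξ - r := (hmapS hr).2
          have h0r : (0:ℝ) ≤ σ r := by
            have := hs.sigma_ge r ⟨hr.1, by linarith [hr.2]⟩
            linarith [hdata.sigma0_pos]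
          linarith
        · exact ⟨hr.1, by linarith [hr.2]⟩
      refine hs.chi_cont.comp ?_ hmapP
      apply Continuous.continuousOn; fun_prop
    have hfeq : ∀ r ∈ Icc (0:ℝ) δ, f r = f 0 + ∫ q in (0:ℝ)..r, h q := by
      intro r hr
      rcases eq_or_lt_of_le hr.1 with h0 | h0
      · rw [← h0]; simp
      · have := intervalIntegral.integral_eq_sub_of_hasDeriv_right_of_le h0.le
          (hfcont.mono (Icc_subset_Icc le_rfl hr.2))
          (fun x hx => hfder x ⟨hx.1, lt_of_lt_of_le hx.2 hr.2⟩)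
          ((hhcont.mono (Icc_subset_Icc le_rfl hr.2)).intervalIntegrable_of_Icc h0.le)
        linarith
    have hG : HasDerivWithinAt (fun r => f 0 + ∫ q in (0:ℝ)..r, h q) (h 0) (Icc 0 δ) 0 :=
      (((ftc_left hδpos hhcont).mono Icc_subset_Ici_self)).const_add (f 0)
    have hf0' : HasDerivWithinAt f (h 0) (Icc 0 δ) 0 := by
      refine hG.congr (fun r hr => hfeq r hr) ?_
      simp
    have hud : UniqueDiffWithinAt ℝ (Icc (0:ℝ) δ) 0 := (uniqueDiffOn_Icc hδpos) 0 ⟨le_refl 0, hδpos.le⟩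
    have e1 := hf0.derivWithin hud
    have e2 := hf0'.derivWithin hud
    have : h 0 = Wval ξ := by rw [hhdef]; norm_num
    rw [← this, ← e2, e1]
  -- main integration along the left characteristic through (s,t)
  set G : ℝ → ℝ := fun ξ => χ₁ ξ - derivWithin χ₀ (Ici σ₀) ξ with hGdef
  have hchi1cont : ContinuousOn χ₁ (Ici σ₀) := hdata.chi1_smooth.continuousOn
  have hchi0'cont : ContinuousOn (derivWithin χ₀ (Ici σ₀)) (Ici σ₀) :=
    hdata.chi0_smooth.continuousOn_derivWithin (uniqueDiffOn_Ici σ₀) (by norm_num)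
  have hGcont : ContinuousOn G (Ici σ₀) := hchi1cont.sub hchi0'cont
  set g : ℝ → ℝ := fun u => G (s + t - 2*u) with hgdef
  have hargmem : ∀ u ∈ Icc (0:ℝ) t, s + t - 2*u ∈ Ici σ₀ := by
    intro u hu
    show σ₀ ≤ s + t - 2*u
    linarith [hu.2]
  have hgcont : ContinuousOn g (Icc 0 t) := by
    refine hGcont.comp ?_ hargmem
    apply Continuous.continuousOn; fun_prop
  set φ : ℝ → ℝ := fun u => F (s + t - u, u) with hφdef
  have hφcont : ContinuousOn φ (Icc 0 t) := by
    have hmapP : MapsTo (fun u : ℝ => ((s + t - u, u) : ℝ×ℝ)) (Icc 0 t) (Ici 0 ×ˢ Icc 0 T') := by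
      intro u hu
      constructor
      · show (0:ℝ) ≤ s + t - u
        have : σ₀ ≤ s + t - 2*u := hargmem u hu
        linarith [hdata.sigma0_pos, hu.1]
      · exact ⟨hu.1, by linarith [hu.2]⟩
    refine hs.chi_cont.comp ?_ hmapP
    apply Continuous.continuousOn; fun_prop
  have hφder : ∀ u ∈ Ioo (0:ℝ) t, HasDerivWithinAt φ (g u) (Ioi u) u := by
    intro u hu
    have hmemU' : ((s + t - u, u) : ℝ×ℝ) ∈ U := by
      refine hmemU _ _ hu.1 hu.2 ?_
      linarith [hu.2]
    have hFd : HasFDerivAt F (A (s + t - u, u)) (s + t - u, u) :=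
      ((hFC _ hmemU').differentiableAt two_ne_zero).hasFDerivAt
    have hline : HasDerivAt (fun q : ℝ => ((s + t - q, q) : ℝ×ℝ)) (-1, 1) u :=
      ((hasDerivAt_id u).const_sub (s + t)).prodMk (hasDerivAt_id u)
    have hcomp : HasDerivAt φ (A (s + t - u, u) (-1,1)) u :=
      HasFDerivAt.comp_hasDerivAt (f := fun q : ℝ => ((s + t - q, q) : ℝ×ℝ)) u hFd hline
    have hval : A (s + t - u, u) (-1,1) = g u := by
      have hW' : A (s + t - u, u) (-1,1) = W (s + t - u, u) := by
        rw [show ((-1,1):ℝ×ℝ) = (0,1) - (1,0) by norm_num, map_sub]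
      rw [hW']
      have hy : s + t - 2*u ∈ Ioo (s-t) (s+t) := by
        constructor <;> [linarith [hu.2]; linarith [hu.1]]
      have hur : u ≤ r0 (s + t - 2*u) := by
        show u ≤ (s + t - (s + t - 2*u))/2
        linarith
      have h1 := htrans (s + t - 2*u) hy u hu.1 hur
      rw [show s + t - 2*u + u = s + t - u by ring] at h1
      rw [h1, hWvalid _ hy]
    rw [hval] at hcomp
    exact hcomp.hasDerivWithinAt
  have hgint : IntervalIntegrable g MeasureTheory.volume 0 t := hgcont.intervalIntegrable_of_Icc ht0.le
  have hmain := intervalIntegral.integral_eq_sub_of_hasDeriv_right_of_le ht0.le hφcont hφder hgint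
  -- endpoint values
  have hφt : φ t = χ s t := by
    show F (s + t - t, t) = χ s t
    rw [show s + t - t = s by ring]
    rfl
  have hφ0 : φ 0 = χ₀ (s + t) := by
    show F (s + t - 0, 0) = χ₀ (s + t)
    rw [show s + t - 0 = s + t by ring]
    exact hs.init_chi (s + t) (by show σ₀ ≤ s + t; linarith)
  -- substitution in the integral
  have hsub : ∫ u in (0:ℝ)..t, g u = (∫ ξ in (s-t)..(s+t), G ξ) / 2 := by
    have h1 : ∫ u in (0:ℝ)..t, G (-2*u + (s+t)) =
        (-2:ℝ)⁻¹ • ∫ ξ in (-2*0 + (s+t))..(-2*t + (s+t)), G ξ :=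
      intervalIntegral.integral_comp_mul_add G (by norm_num) (s+t)
    have h2 : ∫ u in (0:ℝ)..t, g u = ∫ u in (0:ℝ)..t, G (-2*u + (s+t)) := by
      apply intervalIntegral.integral_congr
      intro u _
      show G (s + t - 2*u) = G (-2*u + (s+t))
      ring_nf
    rw [h2, h1]
    rw [show (-2*(0:ℝ) + (s+t)) = s + t by ring, show (-2*t + (s+t)) = s - t by ring]
    rw [intervalIntegral.integral_symm]
    simp
    ring
  -- FTC for χ₀
  have hstret : Icc (s-t) (s+t) ⊆ Ici σ₀ := fun x hx => le_trans hstt hx.1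
  have hchi0int : IntervalIntegrable (derivWithin χ₀ (Ici σ₀)) MeasureTheory.volume (s-t) (s+t) :=
    (hchi0'cont.mono hstret).intervalIntegrable_of_Icc (by linarith)
  have hchi1int : IntervalIntegrable χ₁ MeasureTheory.volume (s-t) (s+t) :=
    ((hchi1cont.mono hstret)).intervalIntegrable_of_Icc (by linarith)
  have hFTC0 : ∫ ξ in (s-t)..(s+t), derivWithin χ₀ (Ici σ₀) ξ = χ₀ (s+t) - χ₀ (s-t) := by
    apply intervalIntegral.integral_eq_sub_of_hasDeriv_right_of_le (by linarith)
      ((hdata.chi0_smooth.continuousOn).mono hstret)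
    · intro x hx
      exact (hχ₀' x (le_trans hstt hx.1.le)).mono (fun y hy => le_trans (le_trans hstt hx.1.le) hy.le)
    · exact hchi0int
  have hGsplit : ∫ ξ in (s-t)..(s+t), G ξ =
      (∫ ξ in (s-t)..(s+t), χ₁ ξ) - ∫ ξ in (s-t)..(s+t), derivWithin χ₀ (Ici σ₀) ξ :=
    intervalIntegral.integral_sub hchi1int hchi0int
  -- assemble
  show χ s t = (χ₀ (s + t) + χ₀ (s - t)) / 2 + (∫ ξ in (s - t)..(s + t), χ₁ ξ) / 2
  rw [hφt, hφ0] at hmain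
  rw [hsub, hGsplit, hFTC0] at hmain
  linarith
/-- Proposition 3.4 (first part): if `(χ, N)` is a classical shock solution on `[0,T)`
(i.e. on `[0,T']` for every `0 < T' < T`) with shock front `σ`, then the extensible
region `E_σ` is contained in the influence domain `{(s,t) : t ≥ 0, s ≥ σ₀ + t}` of the
initial data, and on `E_σ` the deformation `χ` coincides with the unique (D'Alembert)
solution `χ̄` of the wave equation with data `(χ₀, χ₁)`. -/
theorem finite_speed_identification
    (N₁ η τ ζ σ₀ T : ℝ) (χ₀ χ₁ N₀ : ℝ → ℝ)
    (hN₁ : 0 < N₁) (hη : 0 < η) (hηN : η < N₁) (hτη : η < τ) (hτN : τ < N₁) (hζ : 0 ≤ ζ)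
    (hT : 0 < T)
    (hdata : IsShockData N₁ η τ ζ σ₀ χ₀ χ₁ N₀)
    (χ N : ℝ → ℝ → ℝ) (σ : ℝ → ℝ)
    (hsol : ∀ T', 0 < T' → T' < T → IsShockSolution N₁ η τ ζ σ₀ T' χ₀ χ₁ N₀ χ N σ) :
    ∀ t, 0 ≤ t → t < T → ∀ s, σ t ≤ s →
      σ₀ + t ≤ s ∧ χ s t = dAlem χ₀ χ₁ s t := by
  intro t ht0 htT s hst
  rcases eq_or_lt_of_le ht0 with h0 | h0
  · -- t = 0 : d'Alembert's formula reduces to the initial condition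
    have hsol' := hsol (T/2) (by linarith) (by linarith)
    have hσ0 : σ 0 = σ₀ := hsol'.sigma_init
    have hs0 : σ₀ ≤ s := by rw [← hσ0, h0]; exact hst
    constructor
    · rw [← h0]; simpa using hs0
    · rw [← h0]
      have h1 : χ s 0 = χ₀ s := hsol'.init_chi s hs0
      unfold dAlem
      simp [h1]
  · exact main_aux N₁ η τ ζ σ₀ ((t+T)/2) χ₀ χ₁ N₀ hdata χ N σ
      (hsol ((t+T)/2) (by linarith) (by linarith)) t h0 (by linarith) s hst
end
end
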